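/- arXiv:2111.13524 — 7 statements merged into one kernel-verified Lean document; each statement's English description precedes it below -/
import Mathlib

section
/- Let Σ be a finite alphabet with |Σ| = k and let L be a commutative language over Σ that is recognized by a DFA with n states. Then the upward closure ↑L is recognized by some DFA with at most n^k states. -/
open List

def IsCommutativeLang {α : Type} (L : Language α) : Prop :=
  ∀ u v : List α, u ~ v → (u ∈ L ↔ v ∈ L)

def UpClosure {α : Type} (L : Language α) : Language α :=
  {v | ∃ u ∈ L, u <+ v}

def DownClosure {α : Type} (L : Language α) : Language α :=
  {u | ∃ v ∈ L, u <+ v}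

def UpInterior {α : Type} (L : Language α) : Language α :=
  {w | ∃ U : Language α, (∀ x ∈ U, x ∈ L) ∧ UpClosure U = U ∧ w ∈ U}

def DownInterior {α : Type} (L : Language α) : Language α :=
  {w | ∃ U : Language α, (∀ x ∈ U, x ∈ L) ∧ DownClosure U = U ∧ w ∈ U}

def RecognizedBy {α : Type} (L : Language α) (n : ℕ) : Prop :=
  ∃ (σ : Type) (_ : Fintype σ) (M : DFA α σ), Fintype.card σ = n ∧ M.accepts = L

noncomputable def sc {α : Type} (L : Language α) : ℕ :=
  sInf {n | RecognizedBy L n}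

def Nerode {α : Type} (L : Language α) (u v : List α) : Prop :=
  ∀ x : List α, u ++ x ∈ L ↔ v ++ x ∈ L

inductive IsShuffle {α : Type} : List α → List α → List α → Prop
  | nil : IsShuffle [] [] []
  | left (x : α) {u v w : List α} : IsShuffle u v w → IsShuffle (x :: u) v (x :: w)
  | right (y : α) {u v w : List α} : IsShuffle u v w → IsShuffle u (y :: v) (y :: w)

def Shuffle {α : Type} (U V : Language α) : Language α :=
  {w | ∃ u ∈ U, ∃ v ∈ V, IsShuffle u v w}

def IsPermDFA {α σ : Type} (M : DFA α σ) : Prop :=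
  ∀ a : α, Function.Bijective fun q => M.step q a

def IsGroupLang {α : Type} (L : Language α) : Prop :=
  ∃ (σ : Type) (_ : Fintype σ) (M : DFA α σ), IsPermDFA M ∧ M.accepts = L

def wpow {α : Type} (w : List α) (n : ℕ) : List α :=
  (List.replicate n w).flatten

def IsAperiodicDFA {α σ : Type} (M : DFA α σ) : Prop :=
  ∀ (q : σ) (w : List α) (n : ℕ), 1 ≤ n → M.evalFrom q (wpow w n) = q → M.evalFrom q w = q

def IsAperiodicLang {α : Type} (L : Language α) : Prop :=
  ∃ (σ : Type) (_ : Fintype σ) (M : DFA α σ), IsAperiodicDFA M ∧ M.accepts = L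

def ShuffleList {α : Type} : List (Language α) → Language α
  | [] => {([] : List α)}
  | L :: Ls => Shuffle L (ShuffleList Ls)

def UnaryGroupLang {α : Type} (a : α) (U : Language α) : Prop :=
  (∀ w ∈ U, ∀ x ∈ w, x = a) ∧
  ∃ (σ : Type) (_ : Fintype σ) (M : DFA Unit σ), IsPermDFA M ∧
    ∀ n : ℕ, (List.replicate n a ∈ U ↔ List.replicate n () ∈ M.accepts)

def UnaryAperiodicLang {α : Type} (a : α) (U : Language α) : Prop :=
  (∀ w ∈ U, ∀ x ∈ w, x = a) ∧
  ∃ (σ : Type) (_ : Fintype σ) (M : DFA Unit σ), IsAperiodicDFA M ∧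
    ∀ n : ℕ, (List.replicate n a ∈ U ↔ List.replicate n () ∈ M.accepts)

/-!
Pumping down shows that every word of a language accepted by an `n`-state DFA has a subword of
length `< n` in the language. Hence, for commutative `L`, `w ∈ ↑L` iff the letter counts of `w`
dominate those of some `u ∈ L` whose counts are all `< n`; this only depends on the counts of `w`
truncated at `n - 1`, which a DFA with `n ^ k` states can keep track of.
-/

namespace DFA

variable {α σ : Type} (M : DFA α σ)

theorem exists_sublist_mem_accepts_length_lt [Fintype σ] {w : List α} (hw : w ∈ M.accepts) :
    ∃ u ∈ M.accepts, u <+ w ∧ u.length < Fintype.card σ := by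
  induction h : w.length using Nat.strong_induction_on generalizing w with
  | _ l ih =>
    by_cases hlen : w.length < Fintype.card σ
    · exact ⟨w, hw, Sublist.refl w, hlen⟩
    obtain ⟨x, y, z, rfl, -, hy_ne, hpump⟩ := M.pumping_lemma hw (not_lt.mp hlen)
    have hxz : x ++ z ∈ M.accepts :=
      hpump ⟨x ++ [], ⟨x, rfl, [], Language.nil_mem_kstar _, rfl⟩, z, rfl, by simp⟩
    have hy : 0 < y.length := length_pos_iff.mpr hy_ne
    obtain ⟨u, hu, hsub, hlt⟩ := ih _ (by simp only [length_append] at h ⊢; omega) hxz rfl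
    exact ⟨u, hu, hsub.trans (by simp), hlt⟩

end DFA

section CappedCount

variable {α : Type} [DecidableEq α] (m : ℕ)

def capCount (w : List α) (a : α) : Fin (m + 1) :=
  ⟨min (w.count a) m, Nat.lt_succ_of_le (min_le_right _ _)⟩

def cappedCountDFA (A : Set (α → Fin (m + 1))) : DFA α (α → Fin (m + 1)) where
  step f a := Function.update f a ⟨min (f a + 1) m, Nat.lt_succ_of_le (min_le_right _ _)⟩
  start := 0
  accept := A

theorem cappedCountDFA_eval (A : Set (α → Fin (m + 1))) (w : List α) :
    (cappedCountDFA m A).eval w = capCount m w := by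
  induction w using List.reverseRecOn with
  | nil => funext a; simp [capCount, cappedCountDFA]
  | append_singleton w b ih =>
    rw [DFA.eval_append_singleton, ih]
    funext a
    by_cases hab : a = b
    · subst hab
      simp only [cappedCountDFA, capCount, Function.update_self, count_append, count_singleton_self,
        Fin.mk.injEq]
      omega
    · simp [cappedCountDFA, capCount, hab, Ne.symm hab]

theorem mem_cappedCountDFA_accepts {A : Set (α → Fin (m + 1))} {w : List α} :
    w ∈ (cappedCountDFA m A).accepts ↔ capCount m w ∈ A := by
  rw [DFA.mem_accepts, cappedCountDFA_eval]
  rfl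

end CappedCount

namespace IsCommutativeLang

variable {α : Type} {L : Language α}

theorem mem_upClosure_of_subperm (hL : IsCommutativeLang L) {u w : List α} (hu : u ∈ L)
    (huw : u <+~ w) : w ∈ UpClosure L := by
  obtain ⟨u', hperm, hsub⟩ := huw
  exact ⟨u', (hL _ _ hperm).2 hu, hsub⟩

theorem mem_upClosure_of_capCount_eq [DecidableEq α] {σ : Type} [Fintype σ]
    (hL : IsCommutativeLang L) (M : DFA α σ) (hM : M.accepts = L) {m : ℕ}
    (hσ : Fintype.card σ ≤ m + 1) {v w : List α} (hvw : capCount m v = capCount m w)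
    (hv : v ∈ UpClosure L) : w ∈ UpClosure L := by
  obtain ⟨u, hu, huv⟩ := hv
  obtain ⟨u', hu', hu'u, hlen⟩ := M.exists_sublist_mem_accepts_length_lt (hM ▸ hu)
  refine hL.mem_upClosure_of_subperm (hM ▸ hu') (subperm_ext_iff.2 fun a _ => ?_)
  have h_le_m : count a u' ≤ m := count_le_length.trans (by omega)
  have h_le_v : count a u' ≤ count a v := (hu'u.trans huv).count_le a
  have h_cap : min (count a v) m = min (count a w) m := congrArg (fun f => (f a : ℕ)) hvw
  omega

end IsCommutativeLang

/-- upward closure of a commutative language recognized by a DFA with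
`n` states is recognized by a DFA with at most `n ^ k` states, `k` the alphabet size. -/
theorem upClosure_state_bound {α : Type} [Fintype α] (k n : ℕ)
    (hk : Fintype.card α = k) (L : Language α) (hcomm : IsCommutativeLang L)
    (hrec : ∃ (σ : Type) (_ : Fintype σ) (M : DFA α σ),
      Fintype.card σ = n ∧ M.accepts = L) :
    ∃ (τ : Type) (_ : Fintype τ) (M' : DFA α τ),
      Fintype.card τ ≤ n ^ k ∧ M'.accepts = UpClosure L := by
  classical
  obtain ⟨σ, _, M, hcard, hM⟩ := hrec
  obtain ⟨m, rfl⟩ : ∃ m, n = m + 1 :=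
    Nat.exists_eq_succ_of_ne_zero (hcard ▸ (Fintype.card_pos_iff.2 ⟨M.start⟩).ne')
  refine ⟨α → Fin (m + 1), inferInstance, cappedCountDFA m (capCount m '' UpClosure L),
    by simp [hk], ?_⟩
  ext w
  rw [mem_cappedCountDFA_accepts]
  constructor
  · rintro ⟨v, hv, hvw⟩
    exact hcomm.mem_upClosure_of_capCount_eq M hM hcard.le hvw hv
  · exact fun hw => ⟨w, hw, rfl⟩
end

section
/- Let Σ be a finite alphabet with |Σ| = k and let L be a commutative language over Σ that is recognized by a DFA with n states. Then the downward closure ↓L is recognized by some DFA with at most n^k states. -/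
open List

/-! Run `M` on each letter separately: the state `M` reaches on `a ^ |w|_a`, for every letter `a`,
is computed by a DFA with state set `σ ^ α`. Commutativity of `L` turns "`M` reaches the same state
on `x` and `y`" into "`x` and `y` are interchangeable in every context of `L`" (move them to the
front). If `u ≼ v ∈ L`, write `v` up to permutation as `u` sorted into letter blocks, followed by a
rest `r`; trading each block `a ^ |u|_a` for `a ^ |u'|_a` keeps the word in `L` whenever `u` and
`u'` have the same profile, and then `u' ∈ ↓L`. So `↓L` is a union of profile classes. -/

variable {α σ : Type}

def SyntacticEquiv (L : Language α) (x y : List α) : Prop :=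
  ∀ p s : List α, p ++ x ++ s ∈ L ↔ p ++ y ++ s ∈ L

namespace SyntacticEquiv

variable {L : Language α}

theorem append {x y x' y' : List α} (h : SyntacticEquiv L x y) (h' : SyntacticEquiv L x' y') :
    SyntacticEquiv L (x ++ x') (y ++ y') := fun p s => by
  simpa only [append_assoc] using
    (h p (x' ++ s)).trans (by simpa only [append_assoc] using h' (p ++ y) s)

theorem flatten_map {ι : Type} {f g : ι → List α} :
    ∀ l : List ι, (∀ i ∈ l, SyntacticEquiv L (f i) (g i)) →
      SyntacticEquiv L (l.map f).flatten (l.map g).flatten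
  | [], _ => fun _ _ => Iff.rfl
  | i :: l, h => by
    simpa only [map_cons, flatten_cons] using
      (h i mem_cons_self).append (flatten_map l fun j hj => h j (mem_cons_of_mem i hj))

end SyntacticEquiv

theorem IsCommutativeLang.syntacticEquiv_of_eval_eq {L : Language α} (hL : IsCommutativeLang L)
    {M : DFA α σ} (hM : M.accepts = L) {x y : List α} (h : M.eval x = M.eval y) :
    SyntacticEquiv L x y := by
  intro p s
  have hmem : ∀ z, p ++ z ++ s ∈ L ↔ M.evalFrom (M.eval z) (p ++ s) ∈ M.accept := fun z => by
    rw [hL _ (z ++ (p ++ s)) (by simpa only [append_assoc] using perm_append_comm.append_right s),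
      ← hM, DFA.mem_accepts, DFA.eval, DFA.evalFrom_of_append]
  rw [hmem, hmem, h]

section LetterBlocks

variable [Fintype α] [DecidableEq α]

noncomputable def letterBlocks (w : List α) : List α :=
  (Finset.univ.toList.map fun a => replicate (w.count a) a).flatten

theorem letterBlocks_perm (w : List α) : letterBlocks w ~ w := by
  rw [perm_iff_count]
  intro b
  simp [letterBlocks, count_flatten, count_replicate, Finset.sum_map_toList]

end LetterBlocks

namespace DFA

theorem accepts_eq_of_saturated (M : DFA α σ) {K : Language α}
    (hF : M.accept = M.eval '' K) (hK : ∀ u v, M.eval u = M.eval v → u ∈ K → v ∈ K) :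
    M.accepts = K := by
  ext w
  rw [mem_accepts, hF]
  exact ⟨fun ⟨u, hu, huw⟩ => hK u w huw hu, fun hw => ⟨w, hw, rfl⟩⟩

variable [DecidableEq α] (M : DFA α σ)

def letterProfile (w : List α) (a : α) : σ :=
  M.eval (replicate (w.count a) a)

def letterwise (F : Set (α → σ)) : DFA α (α → σ) where
  step f a := Function.update f a (M.step (f a) a)
  start _ := M.start
  accept := F

theorem letterwise_evalFrom (F : Set (α → σ)) (w : List α) (f : α → σ) (a : α) :
    (M.letterwise F).evalFrom f w a = M.evalFrom (f a) (replicate (w.count a) a) := by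
  induction w generalizing f with
  | nil => rfl
  | cons b w ih =>
    rw [evalFrom_cons, ih]
    by_cases hab : a = b
    · subst hab
      simp [letterwise, replicate_succ, evalFrom_cons]
    · simp [letterwise, hab, Ne.symm hab]

theorem letterwise_eval (F : Set (α → σ)) : (M.letterwise F).eval = M.letterProfile :=
  funext fun w => funext fun a => M.letterwise_evalFrom F w _ a

end DFA

theorem IsCommutativeLang.mem_downClosure_of_letterProfile_eq [Fintype α] [DecidableEq α]
    {L : Language α} (hL : IsCommutativeLang L) {M : DFA α σ} (hM : M.accepts = L)
    {u u' : List α} (h : M.letterProfile u = M.letterProfile u') (hu : u ∈ DownClosure L) :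
    u' ∈ DownClosure L := by
  obtain ⟨v, hv, huv⟩ := hu
  obtain ⟨r, hvr⟩ := huv.exists_perm_append
  have hblocks : letterBlocks u ++ r ∈ L :=
    (hL _ _ (hvr.trans ((letterBlocks_perm u).append_right r).symm)).mp hv
  have hequiv : SyntacticEquiv L (letterBlocks u) (letterBlocks u') :=
    SyntacticEquiv.flatten_map _ fun a _ => hL.syntacticEquiv_of_eval_eq hM (congrFun h a)
  have hblocks' : letterBlocks u' ++ r ∈ L := by
    simpa only [nil_append] using (hequiv [] r).mp (by simpa only [nil_append] using hblocks)
  obtain ⟨w, hw, hsub⟩ := subperm_iff.mp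
    ((letterBlocks_perm u').symm.subperm.trans (sublist_append_left _ r).subperm)
  exact ⟨w, (hL _ _ hw).mpr hblocks', hsub⟩

/-- downward closure of a commutative language recognized by a DFA with
`n` states is recognized by a DFA with at most `n ^ k` states, `k` the alphabet size. -/
theorem downClosure_state_bound {α : Type} [Fintype α] (k n : ℕ)
    (hk : Fintype.card α = k) (L : Language α) (hcomm : IsCommutativeLang L)
    (hrec : ∃ (σ : Type) (_ : Fintype σ) (M : DFA α σ),
      Fintype.card σ = n ∧ M.accepts = L) :
    ∃ (τ : Type) (_ : Fintype τ) (M' : DFA α τ),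
      Fintype.card τ ≤ n ^ k ∧ M'.accepts = DownClosure L := by
  classical
  obtain ⟨σ, _, M, rfl, hM⟩ := hrec
  refine ⟨α → σ, inferInstance, M.letterwise (M.letterProfile '' DownClosure L),
    by rw [Fintype.card_fun, hk], ?_⟩
  refine DFA.accepts_eq_of_saturated _ (by rw [DFA.letterwise_eval]; rfl) fun u v huv => ?_
  rw [DFA.letterwise_eval] at huv
  exact hcomm.mem_downClosure_of_letterProfile_eq hM huv
end

section
/- Let Σ be a finite alphabet with |Σ| = k and let L be a commutative language over Σ that is recognized by a DFA with n states. Then both the upward interior of L and the downward interior of L are recognized by DFAs with at most n^k states. -/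
open List

/-!
In an `n`-state DFA the states reached after reading `x aᵐ` are eventually periodic in `m`, with
preperiod plus period at most `n`. For a commutative `L` this means a letter can be pumped up once
it occurs at least `n - 1` times, and pumped down once it occurs at least `n` times. Consequently,
removing one occurrence of a letter that occurs at least `n` times does not change membership in
the upward or the downward interior, so membership only depends on the letter counts capped at
`n - 1`. A DFA with state set `α → Fin n` can track these capped counts.
-/

theorem Function.iterate_add_sub_eq {σ : Type*} {f : σ → σ} {x : σ} {i j : ℕ} (hij : i ≤ j)
    (h : f^[i] x = f^[j] x) {m : ℕ} (hm : i ≤ m) : f^[m + (j - i)] x = f^[m] x := by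
  calc f^[m + (j - i)] x = f^[m - i] (f^[j] x) := by
        rw [← Function.iterate_add_apply]; congr 1; omega
    _ = f^[m] x := by
        rw [← h, ← Function.iterate_add_apply]; congr 1; omega

theorem Function.exists_iterate_add_eq {σ : Type*} [Fintype σ] (f : σ → σ) (x : σ) :
    ∃ i p, 0 < p ∧ i + p ≤ Fintype.card σ ∧ ∀ m, i ≤ m → f^[m + p] x = f^[m] x := by
  obtain ⟨i, j, hne, hij⟩ := Fintype.exists_ne_map_eq_of_card_lt
    (fun k : Fin (Fintype.card σ + 1) => f^[k] x) (by simp)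
  rcases Nat.lt_or_gt_of_ne (Fin.val_ne_of_ne hne) with hlt | hlt
  · exact ⟨i, j - i, by omega, by omega, fun m => Function.iterate_add_sub_eq hlt.le hij⟩
  · exact ⟨j, i - j, by omega, by omega, fun m => Function.iterate_add_sub_eq hlt.le hij.symm⟩

namespace DFA

variable {α σ : Type*} (M : DFA α σ)

theorem evalFrom_replicate (q : σ) (a : α) (m : ℕ) :
    M.evalFrom q (replicate m a) = (M.step · a)^[m] q := by
  induction m generalizing q with
  | zero => rfl
  | succ m ih => rw [replicate_succ, evalFrom_cons, ih, Function.iterate_succ_apply]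

theorem append_mem_accepts_iff_of_evalFrom_eq {x y y' : List α}
    (h : M.evalFrom (M.eval x) y = M.evalFrom (M.eval x) y') :
    x ++ y ∈ M.accepts ↔ x ++ y' ∈ M.accepts := by
  simp only [mem_accepts, eval, evalFrom_of_append] at h ⊢
  rw [h]

variable [Fintype σ]

theorem exists_gt_evalFrom_replicate_eq (q : σ) (a : α) {m : ℕ}
    (hm : Fintype.card σ ≤ m + 1) :
    ∃ m' > m, M.evalFrom q (replicate m' a) = M.evalFrom q (replicate m a) := by
  obtain ⟨i, p, hp, hip, hper⟩ := Function.exists_iterate_add_eq (M.step · a) q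
  exact ⟨m + p, by omega, by simp only [evalFrom_replicate, hper m (by omega)]⟩

theorem exists_lt_evalFrom_replicate_eq (q : σ) (a : α) {m : ℕ}
    (hm : Fintype.card σ ≤ m) :
    ∃ m' < m, M.evalFrom q (replicate m' a) = M.evalFrom q (replicate m a) := by
  obtain ⟨i, p, hp, hip, hper⟩ := Function.exists_iterate_add_eq (M.step · a) q
  refine ⟨m - p, by omega, ?_⟩
  simp only [evalFrom_replicate, ← hper (m - p) (by omega), Nat.sub_add_cancel (by omega : p ≤ m)]

end DFA

namespace List

variable {α : Type*} [DecidableEq α]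

theorem exists_perm_append_replicate_count (v : List α) (a : α) :
    ∃ x, v ~ x ++ replicate (v.count a) a ∧
      ∀ m, (x ++ replicate m a).count a = m ∧ ∀ b ≠ a, (x ++ replicate m a).count b = v.count b := by
  refine ⟨v.filter (! · == a), ?_, fun m => ⟨?_, fun b hb => ?_⟩⟩
  · have hsplit := (filter_append_perm (· == a) v).symm
    rw [filter_beq] at hsplit
    exact hsplit.trans perm_append_comm
  · simp [count_append, count_eq_zero]
  · rw [count_append, count_replicate, count_filter (by simpa using hb)]
    simp [Ne.symm hb]

theorem count_erase_eq_ite (l : List α) (a b : α) :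
    (l.erase a).count b = if b = a then l.count b - 1 else l.count b := by
  split_ifs with hb
  · rw [hb, count_erase_self]
  · exact count_erase_of_ne hb

end List

section Interiors

variable {α : Type} {L : Language α}

theorem upInterior_eq (L : Language α) :
    UpInterior L = {w | ∀ v, w <+ v → v ∈ L} := by
  ext w
  constructor
  · rintro ⟨U, hUL, hU, hwU⟩ v hwv
    exact hUL v (hU ▸ ⟨w, hwU, hwv⟩)
  · intro hw
    refine ⟨{u | ∀ v, u <+ v → v ∈ L}, fun u hu => hu u (Sublist.refl u), ?_, hw⟩
    ext u
    exact ⟨fun ⟨x, hx, hxu⟩ v huv => hx v (hxu.trans huv), fun hu => ⟨u, hu, Sublist.refl u⟩⟩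

theorem downInterior_eq (L : Language α) :
    DownInterior L = {w | ∀ v, v <+ w → v ∈ L} := by
  ext w
  constructor
  · rintro ⟨U, hUL, hU, hwU⟩ v hvw
    exact hUL v (hU ▸ ⟨w, hwU, hvw⟩)
  · intro hw
    refine ⟨{u | ∀ v, v <+ u → v ∈ L}, fun u hu => hu u (Sublist.refl u), ?_, hw⟩
    ext u
    exact ⟨fun ⟨x, hx, hux⟩ v hvu => hx v (hvu.trans hux), fun hu => ⟨u, hu, Sublist.refl u⟩⟩

namespace IsCommutativeLang

theorem mem_upInterior_iff (hcomm : IsCommutativeLang L) {w : List α} :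
    w ∈ UpInterior L ↔ ∀ v, w <+~ v → v ∈ L := by
  rw [upInterior_eq]
  refine ⟨fun hw v hwv => ?_, fun hw v hwv => hw v hwv.subperm⟩
  obtain ⟨u, hu, hwu⟩ := subperm_iff.mp hwv
  exact (hcomm u v hu).mp (hw u hwu)

theorem mem_downInterior_iff (hcomm : IsCommutativeLang L) {w : List α} :
    w ∈ DownInterior L ↔ ∀ v, v <+~ w → v ∈ L := by
  rw [downInterior_eq]
  refine ⟨fun hw v ⟨u, hu, huw⟩ => (hcomm u v hu).mp (hw u huw), fun hw v hvw => hw v hvw.subperm⟩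

theorem upInterior (hcomm : IsCommutativeLang L) : IsCommutativeLang (UpInterior L) :=
  fun u v huv => by
    simp only [hcomm.mem_upInterior_iff]
    exact forall_congr' fun x => by rw [huv.subperm_right]

theorem downInterior (hcomm : IsCommutativeLang L) : IsCommutativeLang (DownInterior L) :=
  fun u v huv => by
    simp only [hcomm.mem_downInterior_iff]
    exact forall_congr' fun x => by rw [huv.subperm_left]

variable {σ : Type*} [DecidableEq α] [Fintype σ] {M : DFA α σ}

theorem exists_count_gt_mem_iff (hcomm : IsCommutativeLang L) (hM : M.accepts = L)
    {v : List α} {a : α} (hv : Fintype.card σ ≤ v.count a + 1) :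
    ∃ w : List α, v.count a < w.count a ∧ (∀ b ≠ a, w.count b = v.count b) ∧
      (w ∈ L ↔ v ∈ L) := by
  obtain ⟨x, hperm, hcount⟩ := v.exists_perm_append_replicate_count a
  obtain ⟨m', hm', hq⟩ := M.exists_gt_evalFrom_replicate_eq (M.eval x) a hv
  refine ⟨x ++ replicate m' a, by rwa [(hcount m').1], (hcount m').2, ?_⟩
  rw [hcomm _ _ hperm, ← hM]
  exact M.append_mem_accepts_iff_of_evalFrom_eq hq

theorem exists_count_lt_mem_iff (hcomm : IsCommutativeLang L) (hM : M.accepts = L)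
    {v : List α} {a : α} (hv : Fintype.card σ ≤ v.count a) :
    ∃ w : List α, w.count a < v.count a ∧ (∀ b ≠ a, w.count b = v.count b) ∧
      (w ∈ L ↔ v ∈ L) := by
  obtain ⟨x, hperm, hcount⟩ := v.exists_perm_append_replicate_count a
  obtain ⟨m', hm', hq⟩ := M.exists_lt_evalFrom_replicate_eq (M.eval x) a hv
  refine ⟨x ++ replicate m' a, by rwa [(hcount m').1], (hcount m').2, ?_⟩
  rw [hcomm _ _ hperm, ← hM]
  exact M.append_mem_accepts_iff_of_evalFrom_eq hq

theorem erase_mem_upInterior_iff (hcomm : IsCommutativeLang L) (hM : M.accepts = L)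
    {u : List α} {a : α} (hu : Fintype.card σ ≤ u.count a) :
    u.erase a ∈ UpInterior L ↔ u ∈ UpInterior L := by
  simp only [hcomm.mem_upInterior_iff]
  refine ⟨fun h v huv => h v ((erase_subperm a u).trans huv), fun h v huv => ?_⟩
  have hle b := (count_erase_eq_ite u a b).symm.trans_le (subperm_iff_count.mp huv b)
  have hva : Fintype.card σ ≤ v.count a + 1 := by
    have := hle a
    rw [if_pos rfl] at this
    omega
  obtain ⟨w, hgt, heq, hw⟩ := hcomm.exists_count_gt_mem_iff hM hva
  refine hw.mp (h w (subperm_iff_count.mpr fun b => ?_))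
  have := hle b
  split_ifs at this with hb
  · subst hb; omega
  · rw [heq b hb]; exact this

theorem erase_mem_downInterior_iff (hcomm : IsCommutativeLang L) (hM : M.accepts = L)
    {u : List α} {a : α} (hu : Fintype.card σ ≤ u.count a) :
    u.erase a ∈ DownInterior L ↔ u ∈ DownInterior L := by
  simp only [hcomm.mem_downInterior_iff]
  refine ⟨fun h v hvu => ?_, fun h v hvu => h v (hvu.trans (erase_subperm a u))⟩
  have hle := subperm_iff_count.mp hvu
  by_cases hva : v.count a < u.count a
  · refine h v (subperm_iff_count.mpr fun b => ?_)
    rw [count_erase_eq_ite]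
    split_ifs with hb
    · subst hb; omega
    · exact hle b
  · obtain ⟨w, hlt, heq, hw⟩ := hcomm.exists_count_lt_mem_iff hM (v := v) (a := a)
      (hu.trans (not_lt.mp hva))
    refine hw.mp (h w (subperm_iff_count.mpr fun b => ?_))
    rw [count_erase_eq_ite]
    split_ifs with hb
    · subst hb; have := hle b; omega
    · rw [heq b hb]; exact hle b

end IsCommutativeLang

end Interiors

section CappedCount

variable {α : Type} [DecidableEq α]

def cappedCount (t : ℕ) (w : List α) : α → Fin (t + 1) :=
  fun a => ⟨min (w.count a) t, by omega⟩

theorem cappedCount_erase {t : ℕ} {u : List α} {a : α} (h : t < u.count a) :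
    cappedCount t (u.erase a) = cappedCount t u := by
  funext b
  simp only [cappedCount, Fin.mk.injEq, count_erase_eq_ite]
  split_ifs with hb
  · subst hb; omega
  · rfl

theorem IsCommutativeLang.mem_iff_of_cappedCount_eq {I : Language α} {t : ℕ}
    (hcomm : IsCommutativeLang I) (hsat : ∀ u a, t < u.count a → (u.erase a ∈ I ↔ u ∈ I))
    {u v : List α} (h : cappedCount t u = cappedCount t v) : u ∈ I ↔ v ∈ I := by
  induction hlen : u.length + v.length using Nat.strong_induction_on generalizing u v with
  | _ N ih =>
    by_cases hperm : u ~ v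
    · exact hcomm u v hperm
    obtain ⟨a, ha⟩ : ∃ a, u.count a ≠ v.count a := by
      by_contra! hall
      exact hperm (perm_iff_count.mpr hall)
    -- equal capped counts force the larger of the two counts of `a` to exceed `t`
    have hmin := congrArg Fin.val (congrFun h a)
    simp only [cappedCount] at hmin
    rcases Nat.lt_or_gt_of_ne ha with hlt | hlt
    · have hv : t < v.count a := by omega
      rw [← hsat v a hv]
      refine ih _ ?_ (h.trans (cappedCount_erase hv).symm) rfl
      have := length_erase_add_one (count_pos_iff.mp (by omega : 0 < v.count a))
      omega
    · have hu : t < u.count a := by omega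
      rw [← hsat u a hu]
      refine ih _ ?_ ((cappedCount_erase hu).trans h) rfl
      have := length_erase_add_one (count_pos_iff.mp (by omega : 0 < u.count a))
      omega

def cappedCounter (t : ℕ) (I : Language α) : DFA α (α → Fin (t + 1)) where
  step f a b := ⟨min (f b + [a].count b) t, by omega⟩
  start := cappedCount t []
  accept := cappedCount t '' I

theorem cappedCounter_eval (t : ℕ) (I : Language α) (w : List α) :
    (cappedCounter t I).eval w = cappedCount t w := by
  induction w using reverseRecOn with
  | nil => rfl
  | append_singleton w a ih =>
    rw [DFA.eval_append_singleton, ih]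
    funext b
    simp only [cappedCounter, cappedCount, count_append, Fin.mk.injEq]
    omega

theorem IsCommutativeLang.cappedCounter_accepts {I : Language α} {t : ℕ}
    (hcomm : IsCommutativeLang I) (hsat : ∀ u a, t < u.count a → (u.erase a ∈ I ↔ u ∈ I)) :
    (cappedCounter t I).accepts = I := by
  ext w
  rw [DFA.mem_accepts, cappedCounter_eval]
  exact ⟨fun ⟨u, hu, h⟩ => (hcomm.mem_iff_of_cappedCount_eq hsat h).mp hu, fun hw => ⟨w, hw, rfl⟩⟩

end CappedCount

/-- the upward and downward interiors of a commutative language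
recognized by a DFA with `n` states are recognized by DFAs with at most `n ^ k`
states, `k` the alphabet size. -/
theorem interiors_state_bound {α : Type} [Fintype α] (k n : ℕ)
    (hk : Fintype.card α = k) (L : Language α) (hcomm : IsCommutativeLang L)
    (hrec : ∃ (σ : Type) (_ : Fintype σ) (M : DFA α σ),
      Fintype.card σ = n ∧ M.accepts = L) :
    (∃ (τ : Type) (_ : Fintype τ) (M' : DFA α τ),
      Fintype.card τ ≤ n ^ k ∧ M'.accepts = UpInterior L) ∧
    (∃ (τ : Type) (_ : Fintype τ) (M' : DFA α τ),
      Fintype.card τ ≤ n ^ k ∧ M'.accepts = DownInterior L) := by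
  classical
  obtain ⟨σ, _, M, rfl, hM⟩ := hrec
  have : Nonempty σ := ⟨M.start⟩
  have hcard : Fintype.card (α → Fin (Fintype.card σ - 1 + 1)) = Fintype.card σ ^ k := by
    rw [Fintype.card_fun, Fintype.card_fin, hk, Nat.sub_add_cancel Fintype.card_pos]
  exact
    ⟨⟨_, inferInstance, cappedCounter _ _, hcard.le, hcomm.upInterior.cappedCounter_accepts
      fun u a hu => hcomm.erase_mem_upInterior_iff hM (by omega)⟩,
    ⟨_, inferInstance, cappedCounter _ _, hcard.le, hcomm.downInterior.cappedCounter_accepts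
      fun u a hu => hcomm.erase_mem_downInterior_iff hM (by omega)⟩⟩
end

section
/- Let Σ be a finite alphabet and L a commutative regular language over Σ. For each letter a ∈ Σ let i_a ≥ 0 and p_a ≥ 1 be the smallest numbers such that a^{i_a} ≡_L a^{i_a + p_a} with respect to the Nerode right congruence of L. Then each of the state complexities sc(↑L), sc(↓L), sc(upward interior of L) and sc(downward interior of L) is at most ∏_{a∈Σ} (i_a + p_a). -/
open List

set_option linter.unusedSectionVars false
set_option linter.unnecessarySeqFocus false
namespace SCAux

variable {α : Type} [Fintype α] [DecidableEq α]

/-- canonical word with prescribed letter counts -/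
noncomputable def rep (c : α → ℕ) : List α :=
  (Finset.univ : Finset α).toList.flatMap (fun a => List.replicate (c a) a)

lemma count_flatMap (l : List α) (hl : l.Nodup) (c : α → ℕ) (a : α) :
    (l.flatMap (fun b => List.replicate (c b) b)).count a = if a ∈ l then c a else 0 := by
  induction l with
  | nil => simp
  | cons b t ih =>
    have hnd := List.nodup_cons.mp hl
    simp only [List.flatMap_cons, List.count_append, ih hnd.2]
    by_cases hab : a = b
    · subst hab
      simp [List.count_replicate, hnd.1]
    · rw [List.count_replicate]
      simp [hab, Ne.symm hab, List.mem_cons]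

lemma count_rep (c : α → ℕ) (a : α) : (rep c).count a = c a := by
  rw [rep, count_flatMap _ (Finset.nodup_toList _)]
  simp [Finset.mem_toList]

/-- membership in a commutative language only depends on the count vector -/
def S (L : Language α) (c : α → ℕ) : Prop := rep c ∈ L

lemma mem_iff_S (L : Language α) (hcomm : IsCommutativeLang L) (w : List α) :
    w ∈ L ↔ S L (fun a => w.count a) := by
  refine hcomm w (rep fun a => w.count a) ?_
  rw [List.perm_iff_count]
  intro a
  rw [count_rep]

lemma count_eq_S (L : Language α) (hcomm : IsCommutativeLang L) (w : List α) (c : α → ℕ)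
    (h : ∀ a, w.count a = c a) : w ∈ L ↔ S L c := by
  rw [mem_iff_S L hcomm w]
  have : (fun a => w.count a) = c := funext h
  rw [this]

section Pump

variable (L : Language α) (i p : α → ℕ)
  (hcomm : IsCommutativeLang L)
  (hp : ∀ a, 1 ≤ p a)
  (heq : ∀ a, Nerode L (List.replicate (i a) a) (List.replicate (i a + p a) a))

include hcomm hp heq

lemma S_step (a : α) (c : α → ℕ) (h : i a ≤ c a) :
    S L c ↔ S L (Function.update c a (c a + p a)) := by
  have hx := heq a (rep (Function.update c a (c a - i a)))
  have h1 : List.replicate (i a) a ++ rep (Function.update c a (c a - i a)) ∈ L ↔ S L c := by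
    refine count_eq_S L hcomm _ _ (fun b => ?_)
    rw [List.count_append, List.count_replicate, count_rep]
    by_cases hba : b = a
    · subst hba; simp [Function.update_self]; omega
    · simp [Ne.symm hba, Function.update_of_ne hba]
  have h2 : List.replicate (i a + p a) a ++ rep (Function.update c a (c a - i a)) ∈ L ↔
      S L (Function.update c a (c a + p a)) := by
    refine count_eq_S L hcomm _ _ (fun b => ?_)
    rw [List.count_append, List.count_replicate, count_rep]
    by_cases hba : b = a
    · subst hba; simp [Function.update_self]; omega
    · simp [Ne.symm hba, Function.update_of_ne hba]
  rw [← h1, ← h2]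
  exact hx

lemma S_pump (a : α) (c : α → ℕ) (h : i a ≤ c a) (k : ℕ) :
    S L c ↔ S L (Function.update c a (c a + k * p a)) := by
  induction k with
  | zero => simp
  | succ k ih =>
    rw [ih]
    have hstep := S_step L i p hcomm hp heq a (Function.update c a (c a + k * p a))
      (by rw [Function.update_self]; omega)
    rw [Function.update_idem, Function.update_self] at hstep
    rw [hstep]
    have : c a + k * p a + p a = c a + (k + 1) * p a := by ring
    rw [this]

lemma S_pump_eq (a : α) (c : α → ℕ) (x y : ℕ) (hx : i a ≤ x) (hy : i a ≤ y)
    (hxy : (∃ k, y = x + k * p a) ∨ (∃ k, x = y + k * p a)) :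
    S L (Function.update c a x) ↔ S L (Function.update c a y) := by
  rcases hxy with ⟨k, hk⟩ | ⟨k, hk⟩
  · have := S_pump L i p hcomm hp heq a (Function.update c a x)
      (by rw [Function.update_self]; exact hx) k
    rwa [Function.update_idem, Function.update_self, ← hk] at this
  · have := S_pump L i p hcomm hp heq a (Function.update c a y)
      (by rw [Function.update_self]; exact hy) k
    rw [Function.update_idem, Function.update_self, ← hk] at this
    exact this.symm

lemma S_congr (c d : α → ℕ)
    (h : ∀ a, d a = c a ∨ (i a ≤ c a ∧ i a ≤ d a ∧
      ((∃ k, d a = c a + k * p a) ∨ (∃ k, c a = d a + k * p a)))) :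
    S L c ↔ S L d := by
  have key : ∀ l : List α, S L c ↔ S L (fun a => if a ∈ l then d a else c a) := by
    intro l
    induction l with
    | nil => simp
    | cons b t ih =>
      by_cases hbt : b ∈ t
      · have : (fun a => if a ∈ b :: t then d a else c a)
            = (fun a => if a ∈ t then d a else c a) := by
          funext a
          by_cases hab : a = b
          · subst hab; simp [hbt]
          · simp [List.mem_cons, hab]
        rw [this]; exact ih
      · have hmix : (fun a => if a ∈ b :: t then d a else c a)
            = Function.update (fun a => if a ∈ t then d a else c a) b (d b) := by
          funext a
          by_cases hab : a = b
          · subst hab; simp [Function.update_self, hbt]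
          · simp [List.mem_cons, hab, Function.update_of_ne hab]
        rw [hmix, ih]
        have hself : (fun a => if a ∈ t then d a else c a)
            = Function.update (fun a => if a ∈ t then d a else c a) b (c b) := by
          rw [show (c b) = (fun a => if a ∈ t then d a else c a) b by simp [hbt]]
          rw [Function.update_eq_self]
        rcases h b with hb | ⟨h1, h2, h3⟩
        · rw [hb, ← hself]
        · conv_lhs => rw [hself]
          exact S_pump_eq L i p hcomm hp heq b _ (c b) (d b) h1 h2 h3
  have := key (Finset.univ : Finset α).toList
  have hd : (fun a => if a ∈ (Finset.univ : Finset α).toList then d a else c a) = d := by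
    funext a; simp [Finset.mem_toList]
  rwa [hd] at this

end Pump

section Char

lemma exists_sublist (u : List α) (c : α → ℕ) (h : ∀ a, c a ≤ u.count a) :
    ∃ w, w <+ u ∧ ∀ a, w.count a = c a := by
  induction u generalizing c with
  | nil =>
    refine ⟨[], List.Sublist.refl _, fun a => ?_⟩
    have := h a
    simp at this ⊢
    omega
  | cons a t ih =>
    have hcnt : ∀ b, (a :: t).count b = t.count b + if a = b then 1 else 0 := by
      intro b; simp [List.count_cons]
    by_cases hc : c a = 0
    · obtain ⟨w, hw, hwc⟩ := ih c (fun b => by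
        have := h b; rw [hcnt b] at this
        by_cases hba : b = a
        · subst hba; simp at this; omega
        · simpa [Ne.symm hba] using this)
      exact ⟨w, hw.cons a, hwc⟩
    · obtain ⟨w, hw, hwc⟩ := ih (Function.update c a (c a - 1)) (fun b => by
        have := h b; rw [hcnt b] at this
        by_cases hba : b = a
        · subst hba; rw [Function.update_self]; simp at this; omega
        · rw [Function.update_of_ne hba]; simpa [Ne.symm hba] using this)
      refine ⟨a :: w, hw.cons₂ a, fun b => ?_⟩
      have hcw : (a :: w).count b = w.count b + if a = b then 1 else 0 := by
        simp [List.count_cons]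
      rw [hcw, hwc b]
      by_cases hba : b = a
      · subst hba; rw [Function.update_self]; simp; omega
      · rw [Function.update_of_ne hba]; simp [Ne.symm hba]

lemma exists_superlist (u : List α) (c : α → ℕ) (h : ∀ a, u.count a ≤ c a) :
    ∃ w, u <+ w ∧ ∀ a, w.count a = c a := by
  refine ⟨u ++ rep (fun a => c a - u.count a), List.sublist_append_left .., fun a => ?_⟩
  rw [List.count_append, count_rep]
  have := h a
  omega

variable (L : Language α) (hcomm : IsCommutativeLang L)

include hcomm

lemma up_iff (u : List α) :
    u ∈ UpClosure L ↔ ∃ c, (∀ a, c a ≤ u.count a) ∧ S L c := by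
  constructor
  · rintro ⟨u', hu', hsub⟩
    exact ⟨fun a => u'.count a, fun a => hsub.count_le a, (mem_iff_S L hcomm u').1 hu'⟩
  · rintro ⟨c, hc, hSc⟩
    obtain ⟨w, hw, hwc⟩ := exists_sublist u c hc
    exact ⟨w, (count_eq_S L hcomm w c hwc).2 hSc, hw⟩

lemma down_iff (u : List α) :
    u ∈ DownClosure L ↔ ∃ c, (∀ a, u.count a ≤ c a) ∧ S L c := by
  constructor
  · rintro ⟨v', hv', hsub⟩
    exact ⟨fun a => v'.count a, fun a => hsub.count_le a, (mem_iff_S L hcomm v').1 hv'⟩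
  · rintro ⟨c, hc, hSc⟩
    obtain ⟨w, hw, hwc⟩ := exists_superlist u c hc
    exact ⟨w, (count_eq_S L hcomm w c hwc).2 hSc, hw⟩

lemma uint_iff (u : List α) :
    u ∈ UpInterior L ↔ ∀ c, (∀ a, u.count a ≤ c a) → S L c := by
  constructor
  · rintro ⟨U, hUL, hUclosed, hwU⟩ c hc
    obtain ⟨w', hw', hwc⟩ := exists_superlist u c hc
    have hmem : w' ∈ UpClosure U := ⟨u, hwU, hw'⟩
    rw [hUclosed] at hmem
    exact (count_eq_S L hcomm w' c hwc).1 (hUL _ hmem)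
  · intro h
    have hmem : u ∈ {w : List α | ∀ c : α → ℕ, (∀ a, w.count a ≤ c a) → S L c} := h
    refine ⟨{w : List α | ∀ c : α → ℕ, (∀ a, w.count a ≤ c a) → S L c}, ?_, ?_, hmem⟩
    · intro x hx
      exact (mem_iff_S L hcomm x).2 (hx _ (fun a => le_refl _))
    · apply Set.eq_of_subset_of_subset
      · rintro w ⟨x, hx, hsub⟩ c hc
        exact hx c (fun a => le_trans (hsub.count_le a) (hc a))
      · intro w hw
        exact ⟨w, hw, List.Sublist.refl w⟩

lemma dint_iff (u : List α) :
    u ∈ DownInterior L ↔ ∀ c, (∀ a, c a ≤ u.count a) → S L c := by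
  constructor
  · rintro ⟨U, hUL, hUclosed, hwU⟩ c hc
    obtain ⟨w', hw', hwc⟩ := exists_sublist u c hc
    have hmem : w' ∈ DownClosure U := ⟨u, hwU, hw'⟩
    rw [hUclosed] at hmem
    exact (count_eq_S L hcomm w' c hwc).1 (hUL _ hmem)
  · intro h
    have hmem : u ∈ {w : List α | ∀ c : α → ℕ, (∀ a, c a ≤ w.count a) → S L c} := h
    refine ⟨{w : List α | ∀ c : α → ℕ, (∀ a, c a ≤ w.count a) → S L c}, ?_, ?_, hmem⟩
    · intro x hx
      exact (mem_iff_S L hcomm x).2 (hx _ (fun a => le_refl _))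
    · apply Set.eq_of_subset_of_subset
      · rintro w ⟨x, hx, hsub⟩ c hc
        exact hx c (fun a => le_trans (hc a) (hsub.count_le a))
      · intro w hw
        exact ⟨w, hw, List.Sublist.refl w⟩

end Char

section Inv

variable (L : Language α) (i p : α → ℕ)
  (hcomm : IsCommutativeLang L)
  (hp : ∀ a, 1 ≤ p a)
  (heq : ∀ a, Nerode L (List.replicate (i a) a) (List.replicate (i a + p a) a))

include hcomm hp heq

lemma up_inv (u v : List α)
    (hmin : ∀ a, min (u.count a) (i a + p a - 1) = min (v.count a) (i a + p a - 1))
    (hu : u ∈ UpClosure L) : v ∈ UpClosure L := by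
  rw [up_iff L hcomm] at hu ⊢
  obtain ⟨c, hc, hSc⟩ := hu
  refine ⟨fun a => if c a ≤ i a + p a - 1 then c a else i a + (c a - i a) % p a,
    fun a => ?_, ?_⟩
  · have h1 := hmin a; have h2 := hc a; have hpa := hp a
    have hmod : (c a - i a) % p a < p a := Nat.mod_lt _ hpa
    by_cases hca : c a ≤ i a + p a - 1 <;> simp only [hca, if_true, if_false] <;> omega
  · refine (S_congr L i p hcomm hp heq c _ (fun a => ?_)).1 hSc
    by_cases hca : c a ≤ i a + p a - 1
    · left; simp [hca]
    · right
      have hpa := hp a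
      have hmod : (c a - i a) % p a < p a := Nat.mod_lt _ hpa
      have hmd := Nat.mod_add_div' (c a - i a) (p a)
      refine ⟨by omega, by simp [hca], Or.inr ⟨(c a - i a) / p a, ?_⟩⟩
      simp only [hca, if_false]
      omega

lemma down_inv (u v : List α)
    (hmin : ∀ a, min (u.count a) (i a + p a - 1) = min (v.count a) (i a + p a - 1))
    (hu : u ∈ DownClosure L) : v ∈ DownClosure L := by
  rw [down_iff L hcomm] at hu ⊢
  obtain ⟨c, hc, hSc⟩ := hu
  refine ⟨fun a => if v.count a ≤ c a then c a else c a + v.count a * p a,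
    fun a => ?_, ?_⟩
  · have hmul : v.count a * 1 ≤ v.count a * p a := Nat.mul_le_mul_left _ (hp a)
    by_cases hca : v.count a ≤ c a <;> simp only [hca, if_true, if_false] <;> omega
  · refine (S_congr L i p hcomm hp heq c _ (fun a => ?_)).1 hSc
    by_cases hca : v.count a ≤ c a
    · left; simp [hca]
    · right
      have h1 := hmin a; have h2 := hc a; have hpa := hp a
      refine ⟨by omega, by simp [hca]; omega, Or.inl ⟨v.count a, by simp [hca]⟩⟩

lemma uint_inv (u v : List α)
    (hmin : ∀ a, min (u.count a) (i a + p a - 1) = min (v.count a) (i a + p a - 1))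
    (hu : u ∈ UpInterior L) : v ∈ UpInterior L := by
  rw [uint_iff L hcomm] at hu ⊢
  intro c hc
  have hS : S L (fun a => if u.count a ≤ c a then c a else c a + u.count a * p a) := by
    refine hu _ (fun a => ?_)
    have hmul : u.count a * 1 ≤ u.count a * p a := Nat.mul_le_mul_left _ (hp a)
    by_cases hca : u.count a ≤ c a <;> simp only [hca, if_true, if_false] <;> omega
  refine (S_congr L i p hcomm hp heq c _ (fun a => ?_)).2 hS
  by_cases hca : u.count a ≤ c a
  · left; simp [hca]
  · right
    have h1 := hmin a; have h2 := hc a; have hpa := hp a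
    refine ⟨by omega, by simp [hca]; omega, Or.inl ⟨u.count a, by simp [hca]⟩⟩

lemma dint_inv (u v : List α)
    (hmin : ∀ a, min (u.count a) (i a + p a - 1) = min (v.count a) (i a + p a - 1))
    (hu : u ∈ DownInterior L) : v ∈ DownInterior L := by
  rw [dint_iff L hcomm] at hu ⊢
  intro c hc
  have hS : S L (fun a => if c a ≤ u.count a then c a else i a + (c a - i a) % p a) := by
    refine hu _ (fun a => ?_)
    have h1 := hmin a; have h2 := hc a; have hpa := hp a
    have hmod : (c a - i a) % p a < p a := Nat.mod_lt _ hpa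
    by_cases hca : c a ≤ u.count a <;> simp only [hca, if_true, if_false] <;> omega
  refine (S_congr L i p hcomm hp heq c _ (fun a => ?_)).2 hS
  by_cases hca : c a ≤ u.count a
  · left; simp [hca]
  · right
    have h1 := hmin a; have h2 := hc a; have hpa := hp a
    have hmod : (c a - i a) % p a < p a := Nat.mod_lt _ hpa
    have hmd := Nat.mod_add_div' (c a - i a) (p a)
    refine ⟨by omega, by simp [hca], Or.inr ⟨(c a - i a) / p a, ?_⟩⟩
    simp only [hca, if_false]
    omega

end Inv

section Recog

variable (ip : α → ℕ) (hip : ∀ a, 1 ≤ ip a)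

include hip

/-- the capped count vector, as a state of the counting DFA -/
def capF (c : α → ℕ) : ∀ a, Fin (ip a) :=
  fun a => ⟨min (c a) (ip a - 1), by have := hip a; omega⟩

/-- the counting DFA -/
def capDFA (L' : Language α) : DFA α (∀ a, Fin (ip a)) where
  step := fun q a => capF ip hip (fun b => (q b : ℕ) + if b = a then 1 else 0)
  start := capF ip hip (fun _ => 0)
  accept := {q | ∃ w : List α, capF ip hip (fun a => w.count a) = q ∧ w ∈ L'}

lemma capDFA_eval (L' : Language α) (w : List α) (c : α → ℕ) :
    (capDFA ip hip L').evalFrom (capF ip hip c) w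
      = capF ip hip (fun a => c a + w.count a) := by
  induction w generalizing c with
  | nil =>
    show capF ip hip c = _
    funext a
    apply Fin.ext
    simp [capF]
  | cons a t ih =>
    show (capDFA ip hip L').evalFrom ((capDFA ip hip L').step (capF ip hip c) a) t = _
    have hstep : (capDFA ip hip L').step (capF ip hip c) a
        = capF ip hip (fun b => c b + if b = a then 1 else 0) := by
      funext b
      apply Fin.ext
      show (min (min (c b) (ip b - 1) + if b = a then 1 else 0) (ip b - 1)) = _
      by_cases hba : b = a <;> simp only [hba, if_true, if_false, capF] <;> omega
    rw [hstep, ih]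
    funext b
    apply Fin.ext
    have hc : (a :: t).count b = t.count b + if b = a then 1 else 0 := by
      by_cases hba : b = a
      · subst hba; simp [List.count_cons]
      · simp [List.count_cons, Ne.symm hba, hba]
    simp only [capF]
    rw [hc]
    omega

lemma recog (L' : Language α)
    (h : ∀ u v : List α,
      (∀ a, min (u.count a) (ip a - 1) = min (v.count a) (ip a - 1)) →
      (u ∈ L' → v ∈ L')) :
    RecognizedBy L' (∏ a : α, ip a) := by
  refine ⟨∀ a, Fin (ip a), inferInstance, capDFA ip hip L', by simp [Fintype.card_pi], ?_⟩
  ext w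
  rw [DFA.mem_accepts]
  have heval : (capDFA ip hip L').eval w = capF ip hip (fun a => w.count a) := by
    show (capDFA ip hip L').evalFrom (capF ip hip (fun _ => 0)) w = _
    rw [capDFA_eval]
    funext a
    apply Fin.ext
    simp [capF]
  rw [heval]
  constructor
  · rintro ⟨w', hw', hw'L⟩
    refine h w' w (fun a => ?_) hw'L
    have := congrFun hw' a
    simpa [capF, Fin.ext_iff] using this
  · intro hw
    exact ⟨w, rfl, hw⟩

end Recog

end SCAux
/-- the state complexities of the upward/downward closures and interiors
of a commutative regular language are bounded by the product of `i_a + p_a`, where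
`(i_a)` and `(p_a)` are the index and period vectors of the language. -/
theorem sc_closure_interior_index_period_bound {α : Type} [Fintype α]
    (L : Language α) (hcomm : IsCommutativeLang L)
    (hreg : ∃ n, RecognizedBy L n)
    (i p : α → ℕ)
    (hp : ∀ a, 1 ≤ p a)
    (heq : ∀ a, Nerode L (List.replicate (i a) a) (List.replicate (i a + p a) a))
    (hmin_i : ∀ a i', (∃ p', 1 ≤ p' ∧
      Nerode L (List.replicate i' a) (List.replicate (i' + p') a)) → i a ≤ i')
    (hmin_p : ∀ a p', 1 ≤ p' →
      Nerode L (List.replicate (i a) a) (List.replicate (i a + p') a) → p a ≤ p') :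
    sc (UpClosure L) ≤ ∏ a : α, (i a + p a) ∧
    sc (DownClosure L) ≤ ∏ a : α, (i a + p a) ∧
    sc (UpInterior L) ≤ ∏ a : α, (i a + p a) ∧
    sc (DownInterior L) ≤ ∏ a : α, (i a + p a) := by
  letI : DecidableEq α := Classical.decEq α
  have key : ∀ L' : Language α,
      (∀ u v : List α,
        (∀ a, min (u.count a) (i a + p a - 1) = min (v.count a) (i a + p a - 1)) →
        (u ∈ L' → v ∈ L')) →
      sc L' ≤ ∏ a : α, (i a + p a) := by
    intro L' hL'
    exact Nat.sInf_le
      (SCAux.recog (fun a => i a + p a) (fun a => by have := hp a; show 1 ≤ i a + p a; omega) L' hL')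
  exact ⟨key _ (fun u v hmin => SCAux.up_inv L i p hcomm hp heq u v hmin),
    key _ (fun u v hmin => SCAux.down_inv L i p hcomm hp heq u v hmin),
    key _ (fun u v hmin => SCAux.uint_inv L i p hcomm hp heq u v hmin),
    key _ (fun u v hmin => SCAux.dint_inv L i p hcomm hp heq u v hmin)⟩
end

section
/- Let Σ = {a_1, …, a_k} be a finite alphabet and L a language over Σ. Then L is a commutative group language (commutative and recognized by a permutation DFA) if and only if L is a finite union of languages of the form U_1 ⧢ U_2 ⧢ ⋯ ⧢ U_k, where each U_j consists only of words over the single letter a_j and, viewed as a language over the unary alphabet {a_j}, is a group language. -/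
/-! Both sides say that whether a word lies in `L` depends only on its letter counts
modulo some `N ≠ 0`. In a permutation DFA every letter acts by a permutation of order
dividing `N = |Sym(Q)|`; by commutativity a word may be replaced by `a₁^c₁ ⋯ a_k^c_k`,
and then each `cⱼ` may be reduced modulo `N`. Conversely, a language with this property
is recognized by the permutation DFA on `Σ → ℤ/N` that counts letters modulo `N`.
A word `w` lies in a shuffle `U₁ ⧢ ⋯ ⧢ U_k` of single-letter languages iff
`aⱼ^|w|ⱼ ∈ Uⱼ` for every `j`, so the normal form is a finite union over the admissible
residue vectors. -/

open List

section Shuffle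

variable {α : Type}

theorem IsShuffle.eq_filter {p : α → Bool} {u v w : List α} (h : IsShuffle u v w)
    (hu : ∀ x ∈ u, p x) (hv : ∀ x ∈ v, p x = false) :
    u = w.filter p ∧ v = w.filter (fun x => !p x) := by
  induction h with
  | nil => simp
  | left x _ ih =>
    obtain ⟨rfl, rfl⟩ := ih (fun y hy => hu y (mem_cons_of_mem x hy)) hv
    simp [hu x mem_cons_self]
  | right y _ ih =>
    obtain ⟨rfl, rfl⟩ := ih hu (fun z hz => hv z (mem_cons_of_mem y hz))
    simp [hv y mem_cons_self]

theorem isShuffle_filter (p : α → Bool) (w : List α) :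
    IsShuffle (w.filter p) (w.filter fun x => !p x) w := by
  induction w with
  | nil => exact .nil
  | cons x w ih =>
    cases hx : p x
    · simpa [filter_cons, hx] using ih.right x
    · simpa [filter_cons, hx] using ih.left x

theorem mem_shuffle_iff {p : α → Bool} {U V : Language α} (hU : ∀ u ∈ U, ∀ x ∈ u, p x)
    (hV : ∀ v ∈ V, ∀ x ∈ v, p x = false) (w : List α) :
    w ∈ Shuffle U V ↔ w.filter p ∈ U ∧ w.filter (fun x => !p x) ∈ V := by
  constructor
  · rintro ⟨u, hu, v, hv, h⟩
    obtain ⟨rfl, rfl⟩ := h.eq_filter (hU u hu) (hV v hv)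
    exact ⟨hu, hv⟩
  · rintro ⟨hu, hv⟩
    exact ⟨_, hu, _, hv, isShuffle_filter p w⟩

theorem mem_shuffleList_map_iff [DecidableEq α] (U : α → Language α)
    (hU : ∀ a, ∀ w ∈ U a, ∀ x ∈ w, x = a) {as : List α} (has : as.Nodup) (w : List α) :
    w ∈ ShuffleList (as.map U) ↔
      (∀ x ∈ w, x ∈ as) ∧ ∀ a ∈ as, replicate (w.count a) a ∈ U a := by
  induction as generalizing w with
  | nil => exact eq_nil_iff_forall_not_mem.trans (by simp)
  | cons a as ih =>
    obtain ⟨ha, has⟩ := nodup_cons.mp has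
    have hV : ∀ v ∈ ShuffleList (as.map U), ∀ x ∈ v, (x == a) = false := by
      intro v hv x hx
      simpa using ne_of_mem_of_not_mem (((ih has v).mp hv).1 x hx) ha
    have hUa : ∀ u ∈ U a, ∀ x ∈ u, x == a := fun u hu x hx => by simpa using hU a u hu x hx
    rw [map_cons, ShuffleList, mem_shuffle_iff hUa hV, filter_beq, ih has]
    have hletters : (∀ x ∈ w.filter (fun x => !x == a), x ∈ as) ↔ ∀ x ∈ w, x ∈ a :: as := by
      simp [or_iff_not_imp_left]
    have hcounts : (∀ b ∈ as, replicate ((w.filter fun x => !x == a).count b) b ∈ U b) ↔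
        ∀ b ∈ as, replicate (w.count b) b ∈ U b :=
      forall₂_congr fun b hb => by
        rw [count_filter (by simpa using ne_of_mem_of_not_mem hb ha)]
    rw [hletters, hcounts, forall_mem_cons]
    tauto

theorem mem_iUnion_shuffleList_iff {k : ℕ} {ι : Type} (U : ι → Fin k → Language (Fin k))
    (hU : ∀ i j, ∀ w ∈ U i j, ∀ x ∈ w, x = j) (w : List (Fin k)) :
    w ∈ (⋃ i, ShuffleList ((finRange k).map (U i)) : Language (Fin k)) ↔
      ∃ i, ∀ j, replicate (w.count j) j ∈ U i j := by
  refine Set.mem_iUnion.trans (exists_congr fun i =>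
    (mem_shuffleList_map_iff (U i) (hU i) (nodup_finRange k) w).trans ?_)
  simp

end Shuffle

theorem DFA.evalFrom_replicate_s5 {α σ : Type} (M : DFA α σ) (q : σ) (a : α) (n : ℕ) :
    M.evalFrom q (replicate n a) = (M.step · a)^[n] q := by
  induction n generalizing q with
  | zero => rfl
  | succ n ih => rw [replicate_succ, DFA.evalFrom_cons, ih]; rfl

namespace IsPermDFA

variable {α σ : Type} {M : DFA α σ}

theorem evalFrom_replicate_congr (hM : IsPermDFA M) (q : σ) (a : α) {m n : ℕ}
    (h : m ≡ n [MOD Nat.card (Equiv.Perm σ)]) :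
    M.evalFrom q (replicate m a) = M.evalFrom q (replicate n a) := by
  -- `Nat.card` is `0` for infinite `σ`, and the congruence is then an equality.
  let f : Equiv.Perm σ := Equiv.ofBijective _ (hM a)
  have hpow : f ^ m = f ^ n := by rw [← pow_mod_natCard f m, h, pow_mod_natCard]
  simp only [DFA.evalFrom_replicate_s5]
  exact DFunLike.congr_fun hpow q

theorem evalFrom_flatMap_replicate_congr (hM : IsPermDFA M) (q : σ) (as : List α)
    {c d : α → ℕ} (h : ∀ a, c a ≡ d a [MOD Nat.card (Equiv.Perm σ)]) :
    M.evalFrom q (as.flatMap fun a => replicate (c a) a) =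
      M.evalFrom q (as.flatMap fun a => replicate (d a) a) := by
  induction as generalizing q with
  | nil => rfl
  | cons a as ih =>
    simp only [flatMap_cons, DFA.evalFrom_of_append, hM.evalFrom_replicate_congr _ _ (h a), ih]

end IsPermDFA

section CountPeriodic

variable {α : Type} [DecidableEq α]

def IsCountPeriodic (N : ℕ) (L : Language α) : Prop :=
  ∀ u v : List α, (∀ a, u.count a ≡ v.count a [MOD N]) → (u ∈ L ↔ v ∈ L)

theorem IsCountPeriodic.isCommutativeLang {N : ℕ} {L : Language α} (hL : IsCountPeriodic N L) :
    IsCommutativeLang L :=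
  fun u v huv => hL u v fun a => by rw [huv.count_eq]

def countModDFA (N : ℕ) (L : Language α) : DFA α (α → ZMod N) where
  step q a := q + Pi.single a 1
  start := 0
  accept := {q | ∃ w ∈ L, (fun a => (w.count a : ZMod N)) = q}

theorem countModDFA_evalFrom (N : ℕ) (L : Language α) (q : α → ZMod N) (w : List α) :
    (countModDFA N L).evalFrom q w = q + fun a => (w.count a : ZMod N) := by
  induction w generalizing q with
  | nil => ext; simp
  | cons b w ih =>
    rw [DFA.evalFrom_cons, ih]
    ext a
    simp only [countModDFA, Pi.add_apply, Pi.single_apply, count_cons, beq_iff_eq, eq_comm (a := b)]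
    push_cast
    ring

theorem isPermDFA_countModDFA (N : ℕ) (L : Language α) : IsPermDFA (countModDFA N L) :=
  fun _ => (Equiv.addRight _).bijective

theorem IsCountPeriodic.isGroupLang [Fintype α] {N : ℕ} {L : Language α} (hN : N ≠ 0)
    (hL : IsCountPeriodic N L) : IsGroupLang L := by
  have : NeZero N := ⟨hN⟩
  refine ⟨_, inferInstance, countModDFA N L, isPermDFA_countModDFA N L, ?_⟩
  ext v
  rw [DFA.mem_accepts, DFA.eval, countModDFA_evalFrom]
  simp only [countModDFA, funext_iff, zero_add, Set.mem_ofPred_eq, ZMod.natCast_eq_natCast_iff]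
  exact ⟨fun ⟨w, hw, h⟩ => (hL w v h).mp hw, fun hv => ⟨v, hv, fun _ => rfl⟩⟩

noncomputable def parikhWord [Fintype α] (c : α → ℕ) : List α :=
  Finset.univ.toList.flatMap fun a => replicate (c a) a

theorem count_parikhWord [Fintype α] (c : α → ℕ) (a : α) : (parikhWord c).count a = c a := by
  simp [parikhWord, count_flatMap, count_replicate, Function.comp_def, Finset.sum_map_toList]

theorem perm_parikhWord [Fintype α] (w : List α) : w ~ parikhWord (w.count ·) :=
  perm_iff_count.mpr fun a => (count_parikhWord (w.count ·) a).symm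

theorem IsGroupLang.exists_isCountPeriodic [Fintype α] {L : Language α} (hg : IsGroupLang L)
    (hc : IsCommutativeLang L) : ∃ N ≠ 0, IsCountPeriodic N L := by
  obtain ⟨σ, _, M, hM, rfl⟩ := hg
  refine ⟨Nat.card (Equiv.Perm σ), Nat.card_pos.ne', fun u v huv => ?_⟩
  rw [hc _ _ (perm_parikhWord u), hc v _ (perm_parikhWord v)]
  simp only [DFA.mem_accepts, DFA.eval, parikhWord, hM.evalFrom_flatMap_replicate_congr _ _ huv]

end CountPeriodic

theorem unaryGroupLang_length_eq {α : Type} {N : ℕ} (hN : N ≠ 0) (a : α) (r : ZMod N) :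
    UnaryGroupLang a ({w | (∀ x ∈ w, x = a) ∧ (w.length : ZMod N) = r} : Language α) := by
  have hL : IsCountPeriodic N ({v | (v.length : ZMod N) = r} : Language Unit) := by
    intro u v h
    have hcount (u : List Unit) : u.count () = u.length := count_eq_length.mpr fun _ _ => rfl
    have huv := h ()
    rw [hcount, hcount, ← ZMod.natCast_eq_natCast_iff] at huv
    exact Iff.of_eq (congrArg (· = r) huv)
  obtain ⟨σ, hσ, M, hM, hML⟩ := hL.isGroupLang hN
  refine ⟨fun w hw => hw.1, σ, hσ, M, hM, fun n => ?_⟩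
  rw [hML]
  change _ ∧ ((replicate n a).length : ZMod N) = r ↔ ((replicate n ()).length : ZMod N) = r
  simp only [length_replicate]
  exact ⟨And.right, fun h => ⟨fun x => eq_of_mem_replicate, h⟩⟩

theorem UnaryGroupLang.exists_period {α : Type} {a : α} {U : Language α}
    (hU : UnaryGroupLang a U) :
    ∃ p ≠ 0, ∀ m n, m ≡ n [MOD p] → (replicate m a ∈ U ↔ replicate n a ∈ U) := by
  obtain ⟨-, σ, _, M, hM, hMU⟩ := hU
  refine ⟨Nat.card (Equiv.Perm σ), Nat.card_pos.ne', fun m n h => ?_⟩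
  simp only [hMU, DFA.mem_accepts, DFA.eval, hM.evalFrom_replicate_congr _ _ h]

theorem exists_isCountPeriodic_iUnion_shuffleList {k : ℕ} {ι : Type} [Fintype ι]
    {U : ι → Fin k → Language (Fin k)} (hU : ∀ i j, UnaryGroupLang j (U i j)) :
    ∃ N ≠ 0, IsCountPeriodic N (⋃ i, ShuffleList ((finRange k).map (U i))) := by
  choose p hp hpU using fun i j => (hU i j).exists_period
  refine ⟨∏ ij : ι × Fin k, p ij.1 ij.2, Finset.prod_ne_zero_iff.mpr fun ij _ => hp _ _,
    fun u v huv => ?_⟩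
  have hU' i j := (hU i j).1
  refine (mem_iUnion_shuffleList_iff U hU' u).trans
    (Iff.trans ?_ (mem_iUnion_shuffleList_iff U hU' v).symm)
  exact exists_congr fun i => forall_congr' fun j => hpU i j _ _ <| (huv j).of_dvd <|
    Finset.dvd_prod_of_mem (fun ij : ι × Fin k => p ij.1 ij.2) (Finset.mem_univ (i, j))

theorem IsCountPeriodic.exists_eq_iUnion_shuffleList {k N : ℕ} {L : Language (Fin k)}
    (hN : N ≠ 0) (hL : IsCountPeriodic N L) :
    ∃ (n : ℕ) (U : Fin n → Fin k → Language (Fin k)),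
      (∀ i j, UnaryGroupLang j (U i j)) ∧
      L = ⋃ i : Fin n, ShuffleList ((finRange k).map (U i)) := by
  let R := {r : Fin k → ZMod N // ∃ w ∈ L, ∀ j, (w.count j : ZMod N) = r j}
  have : NeZero N := ⟨hN⟩
  let e := (Finite.equivFin R).symm
  let U i j : Language (Fin k) := {w | (∀ x ∈ w, x = j) ∧ (w.length : ZMod N) = (e i).1 j}
  refine ⟨Nat.card R, U, fun i j => unaryGroupLang_length_eq hN j _, ?_⟩
  ext w
  refine Iff.trans ?_ (mem_iUnion_shuffleList_iff U (fun i j w hw => hw.1) w).symm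
  rw [e.exists_congr_left]
  simp only [U, R, Equiv.apply_symm_apply, Subtype.exists]
  constructor
  · intro hw
    exact ⟨_, ⟨w, hw, fun _ => rfl⟩, fun j => ⟨fun x => eq_of_mem_replicate, by simp⟩⟩
  · rintro ⟨r, ⟨w', hw', hr⟩, hw⟩
    refine (hL w' w fun j => ?_).mp hw'
    rw [← ZMod.natCast_eq_natCast_iff, hr j, ← (hw j).2, length_replicate]

/-- a language over `Σ = {a_1, …, a_k}` is a commutative group language
iff it is a finite union of shuffles `U_1 ⧢ ⋯ ⧢ U_k` of unary group languages,
where `U_j` uses only the letter `a_j`. -/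
theorem commutative_group_lang_normal_form (k : ℕ) (L : Language (Fin k)) :
    (IsCommutativeLang L ∧ IsGroupLang L) ↔
    ∃ (n : ℕ) (U : Fin n → Fin k → Language (Fin k)),
      (∀ i j, UnaryGroupLang j (U i j)) ∧
      L = ⋃ i : Fin n, ShuffleList ((List.finRange k).map (U i)) := by
  constructor
  · rintro ⟨hc, hg⟩
    obtain ⟨N, hN, hL⟩ := hg.exists_isCountPeriodic hc
    exact hL.exists_eq_iUnion_shuffleList hN
  · rintro ⟨n, U, hU, rfl⟩
    obtain ⟨N, hN, hL⟩ := exists_isCountPeriodic_iUnion_shuffleList hU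
    exact ⟨hL.isCommutativeLang, hL.isGroupLang hN⟩
end

section
/- Let p and q be distinct prime numbers and Σ = {a_1, …, a_k} a finite alphabet with k ≥ 1. Define U = {w | for every a ∈ Σ, |w|_a ≡ p − 1 (mod p)} and V = {w | for every a ∈ Σ, |w|_a ≡ q − 1 (mod q)}. Then U and V are commutative group languages with sc(U) = p^k and sc(V) = q^k, the shuffle satisfies U ⧢ V = {w | for every a ∈ Σ, |w|_a ∈ {p + q − 2 + xp + yq : x, y ∈ ℕ}}, and sc(U ⧢ V) = (pq)^k. -/
open List

/-!
Every language in the statement is a letter-count language `{w | ∀ a, P |w|_a}`. Such a language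
is recognized by the product, over the letters, of a unary automaton for `P`; the product is a
permutation automaton when the unary one is (a counter modulo `p`). Conversely, if the counts
`0, …, m - 1` are pairwise separated by `P` after adding a common suffix count, then the words
whose letter counts range over `[0, m)^k` are pairwise Nerode-inequivalent, so at least `m ^ k`
states are needed.

Shuffling two letter-count languages adds the count predicates, which turns the two residue
conditions into `n ∈ p + q - 2 + ℕp + ℕq`. Since the Frobenius number of `{p, q}` is
`pq - p - q`, this set contains every `n ≥ pq - 1` but not `pq - 2`: a counter saturating at
`pq - 1` recognizes it, and the suffix count `pq - 2 - i` separates `i` from every larger count.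
-/

section Nerode

variable {α : Type}

theorem card_le_of_pairwise_not_nerode {L : Language α} {n : ℕ} (hL : RecognizedBy L n)
    {ι : Type} [Fintype ι] (W : ι → List α) (hW : Pairwise fun i j => ¬Nerode L (W i) (W j)) :
    Fintype.card ι ≤ n := by
  obtain ⟨σ, _, M, rfl, rfl⟩ := hL
  refine Fintype.card_le_of_injective (fun i => M.eval (W i)) fun i j hij => ?_
  by_contra hne
  refine hW hne fun x => ?_
  simp only [DFA.mem_accepts, DFA.eval, DFA.evalFrom_of_append]
  rw [show M.evalFrom M.start (W i) = M.evalFrom M.start (W j) from hij]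

theorem sc_eq_of_pairwise_not_nerode {L : Language α} {ι : Type} [Fintype ι]
    (hL : RecognizedBy L (Fintype.card ι)) (W : ι → List α)
    (hW : Pairwise fun i j => ¬Nerode L (W i) (W j)) : sc L = Fintype.card ι :=
  le_antisymm (Nat.sInf_le hL)
    (le_csInf ⟨_, hL⟩ fun _ hn => card_le_of_pairwise_not_nerode hn W hW)

theorem List.Sublist.exists_isShuffle {u w : List α} (h : u <+ w) : ∃ v, IsShuffle u v w := by
  induction h with
  | slnil => exact ⟨[], .nil⟩
  | cons a _ ih =>
    obtain ⟨v, hv⟩ := ih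
    exact ⟨a :: v, .right a hv⟩
  | cons_cons a _ ih =>
    obtain ⟨v, hv⟩ := ih
    exact ⟨v, .left a hv⟩

end Nerode

section CountLang

variable {α : Type} [DecidableEq α]

theorem IsShuffle.count_eq {u v w : List α} (h : IsShuffle u v w) (a : α) :
    w.count a = u.count a + v.count a := by
  induction h with
  | nil => rfl
  | left x _ ih => simp only [count_cons, ih]; omega
  | right y _ ih => simp only [count_cons, ih]; omega

noncomputable def wordOfCounts [Fintype α] (g : α → ℕ) : List α :=
  (Finsupp.equivFunOnFinite.symm g).toMultiset.toList

theorem count_wordOfCounts [Fintype α] (g : α → ℕ) (a : α) : (wordOfCounts g).count a = g a := by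
  rw [wordOfCounts, ← Multiset.coe_count, Multiset.coe_toList, Finsupp.count_toMultiset]
  rfl

def countLang (P : ℕ → Prop) : Language α :=
  {w | ∀ a, P (w.count a)}

theorem isCommutativeLang_countLang (P : ℕ → Prop) :
    IsCommutativeLang (countLang P : Language α) :=
  fun _ _ h => forall_congr' fun a => by rw [h.count_eq]

theorem shuffle_countLang [Fintype α] (P Q : ℕ → Prop) :
    Shuffle (countLang P : Language α) (countLang Q) =
      countLang fun n => ∃ i j, P i ∧ Q j ∧ i + j = n := by
  ext w
  constructor
  · rintro ⟨u, hu, v, hv, huvw⟩ a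
    exact ⟨_, _, hu a, hv a, (huvw.count_eq a).symm⟩
  · intro hw
    choose i j hi hj hij using hw
    obtain ⟨u, hu, huw⟩ : wordOfCounts i <+~ w :=
      subperm_ext_iff.mpr fun a _ => by rw [count_wordOfCounts, ← hij a]; omega
    obtain ⟨v, huvw⟩ := huw.exists_isShuffle
    have hcount (a : α) : u.count a = i a := by rw [hu.count_eq, count_wordOfCounts]
    refine ⟨u, fun a => hcount a ▸ hi a, v, fun a => ?_, huvw⟩
    have hv : v.count a = j a := by
      have := huvw.count_eq a; have := hcount a; have := hij a; omega
    exact hv ▸ hj a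

section Automata

variable {σ : Type}

def countingDFA (f : σ → σ) (s₀ : σ) (A : Set σ) : DFA α (α → σ) where
  step s a := Function.update s a (f (s a))
  start _ := s₀
  accept := {s | ∀ a, s a ∈ A}

theorem countingDFA_eval (f : σ → σ) (s₀ : σ) (A : Set σ) (w : List α) :
    (countingDFA f s₀ A).eval w = fun a => f^[w.count a] s₀ := by
  induction w using List.reverseRec with
  | nil => rfl
  | append_singleton w b ih =>
    funext a
    rw [DFA.eval_append_singleton, ih]
    rcases eq_or_ne a b with rfl | hab
    · simp [countingDFA, Function.iterate_succ_apply']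
    · simp [countingDFA, hab, hab.symm]

theorem countingDFA_accepts (f : σ → σ) (s₀ : σ) (A : Set σ) :
    (countingDFA f s₀ A : DFA α (α → σ)).accepts = countLang fun n => f^[n] s₀ ∈ A := by
  ext w
  rw [DFA.mem_accepts, countingDFA_eval]
  rfl

theorem isPermDFA_countingDFA {f : σ → σ} (hf : f.Bijective) (s₀ : σ) (A : Set σ) :
    IsPermDFA (countingDFA f s₀ A : DFA α (α → σ)) := by
  intro a
  let e := Equiv.ofBijective f hf
  refine Function.bijective_iff_has_inverse.mpr
    ⟨fun s => Function.update s a (e.symm (s a)), fun s => ?_, fun s => ?_⟩ <;>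
  · funext b
    rcases eq_or_ne b a with rfl | hb
    · simp [countingDFA, e, Equiv.ofBijective_apply_symm_apply]
    · simp [countingDFA, hb]

variable [Fintype σ] {P : ℕ → Prop} {f : σ → σ} {s₀ : σ} {A : Set σ}

theorem recognizedBy_countLang [Fintype α] (hP : ∀ n, f^[n] s₀ ∈ A ↔ P n) :
    RecognizedBy (countLang P : Language α) (Fintype.card σ ^ Fintype.card α) := by
  obtain rfl : (fun n => f^[n] s₀ ∈ A) = P := funext fun n => propext (hP n)
  exact ⟨_, inferInstance, countingDFA f s₀ A, Fintype.card_fun, countingDFA_accepts f s₀ A⟩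

theorem isGroupLang_countLang [Fintype α] (hf : f.Bijective) (hP : ∀ n, f^[n] s₀ ∈ A ↔ P n) :
    IsGroupLang (countLang P : Language α) := by
  obtain rfl : (fun n => f^[n] s₀ ∈ A) = P := funext fun n => propext (hP n)
  exact ⟨_, inferInstance, countingDFA f s₀ A, isPermDFA_countingDFA hf s₀ A,
    countingDFA_accepts f s₀ A⟩

end Automata

theorem not_nerode_countLang [Fintype α] {P : ℕ → Prop} {u u' : List α} {a₀ : α} {t : ℕ}
    (hu : ∀ b, ∃ t, P (u.count b + t)) (hsep : P (u.count a₀ + t))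
    (hsep' : ¬P (u'.count a₀ + t)) :
    ¬Nerode (countLang P) u u' := by
  choose s hs using hu
  intro h
  let x := wordOfCounts (Function.update s a₀ t)
  have hx : u ++ x ∈ countLang P := fun b => by
    rw [count_append, count_wordOfCounts]
    rcases eq_or_ne b a₀ with rfl | hb
    · simpa using hsep
    · simpa [hb] using hs b
  exact hsep' (by simpa [x, count_wordOfCounts] using (h x).mp hx a₀)

theorem sc_countLang [Fintype α] {P : ℕ → Prop} {m : ℕ}
    (hrec : RecognizedBy (countLang P : Language α) (m ^ Fintype.card α))
    (hcompl : ∀ i < m, ∃ t, P (i + t))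
    (hsep : ∀ i j, i < j → j < m → ∃ t, ¬(P (i + t) ↔ P (j + t))) :
    sc (countLang P : Language α) = m ^ Fintype.card α := by
  have hcard : Fintype.card (α → Fin m) = m ^ Fintype.card α := by simp
  rw [← hcard] at hrec ⊢
  let W (v : α → Fin m) : List α := wordOfCounts fun a => v a
  have hW (v : α → Fin m) (b : α) : (W v).count b = v b := count_wordOfCounts _ b
  have hcomplW (v : α → Fin m) (b : α) : ∃ t, P ((W v).count b + t) :=
    hW v b ▸ hcompl _ (v b).isLt
  have key (v v' : α → Fin m) (a₀ : α) (hlt : (v a₀ : ℕ) < v' a₀) :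
      ¬Nerode (countLang P) (W v) (W v') := by
    obtain ⟨t, ht⟩ := hsep _ _ hlt (v' a₀).isLt
    by_cases hv : P (v a₀ + t)
    · exact not_nerode_countLang (a₀ := a₀) (t := t) (hcomplW v) (by rwa [hW])
        (by rw [hW]; tauto)
    · exact fun h => not_nerode_countLang (a₀ := a₀) (t := t) (hcomplW v')
        (by rw [hW]; tauto) (by rwa [hW]) fun x => (h x).symm
  refine sc_eq_of_pairwise_not_nerode hrec W fun v v' hne => ?_
  obtain ⟨a₀, ha₀⟩ := Function.ne_iff.mp hne
  rcases lt_or_gt_of_ne (Fin.val_ne_of_ne ha₀) with hlt | hlt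
  · exact key v v' a₀ hlt
  · exact fun h => key v' v a₀ hlt fun x => (h x).symm

end CountLang

section Residues

variable {α : Type} [DecidableEq α] {p : ℕ}

theorem mod_eq_sub_one_iff (hp : 0 < p) {n : ℕ} : n % p = p - 1 ↔ ∃ x, n = p - 1 + x * p := by
  constructor
  · intro h
    exact ⟨n / p, by rw [← h]; exact (Nat.mod_add_div' n p).symm⟩
  · rintro ⟨x, rfl⟩
    rw [Nat.add_mul_mod_self_right, Nat.mod_eq_of_lt (Nat.sub_lt hp one_pos)]

theorem iterate_add_one_mem_iff (hp : 0 < p) (n : ℕ) :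
    (· + 1)^[n] (0 : ZMod p) ∈ ({((p - 1 : ℕ) : ZMod p)} : Set (ZMod p)) ↔ n % p = p - 1 := by
  rw [add_right_iterate_apply_zero, nsmul_one, Set.mem_singleton_iff,
    ZMod.natCast_eq_natCast_iff', Nat.mod_eq_of_lt (Nat.sub_lt hp one_pos)]

theorem isGroupLang_countLang_mod [Fintype α] (hp : 0 < p) :
    IsGroupLang (countLang (· % p = p - 1) : Language α) :=
  have : NeZero p := ⟨hp.ne'⟩
  isGroupLang_countLang (add_left_injective 1).bijective_of_finite (iterate_add_one_mem_iff hp)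

theorem sc_countLang_mod [Fintype α] (hp : 0 < p) :
    sc (countLang (· % p = p - 1) : Language α) = p ^ Fintype.card α := by
  have : NeZero p := ⟨hp.ne'⟩
  refine sc_countLang ?_ (fun i hi => ⟨p - 1 - i, ?_⟩) (fun i j hij hj => ⟨p - 1 - i, ?_⟩)
  · simpa using recognizedBy_countLang (α := α) (iterate_add_one_mem_iff hp)
  · rw [Nat.add_sub_cancel' (by omega)]
    exact Nat.mod_eq_of_lt (by omega)
  · rw [Nat.add_sub_cancel' (by omega), Nat.mod_eq_of_lt (by omega),
      show j + (p - 1 - i) = j - i - 1 + p by omega, Nat.add_mod_right,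
      Nat.mod_eq_of_lt (by omega)]
    omega

theorem shuffle_countLang_mod [Fintype α] {q : ℕ} (hp : 0 < p) (hq : 0 < q) :
    Shuffle (countLang (· % p = p - 1) : Language α) (countLang (· % q = q - 1)) =
      countLang fun n => ∃ x y : ℕ, n = p + q - 2 + x * p + y * q := by
  rw [shuffle_countLang]
  congr
  funext n
  simp only [mod_eq_sub_one_iff hp, mod_eq_sub_one_iff hq]
  apply propext
  constructor
  · rintro ⟨_, _, ⟨x, rfl⟩, ⟨y, rfl⟩, rfl⟩
    exact ⟨x, y, by omega⟩
  · rintro ⟨x, y, rfl⟩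
    exact ⟨_, _, ⟨x, rfl⟩, ⟨y, rfl⟩, by omega⟩

end Residues

theorem Fin.val_orderSucc {c : ℕ} (i : Fin (c + 1)) :
    ((Order.succ i : Fin (c + 1)) : ℕ) = min ((i : ℕ) + 1) c := by
  induction i using Fin.lastCases with
  | last => simp
  | cast j => simp only [Fin.orderSucc_castSucc, Fin.val_succ, Fin.val_castSucc]; omega

theorem Fin.val_orderSucc_iterate_zero (c n : ℕ) :
    ((Order.succ^[n] (0 : Fin (c + 1)) : Fin (c + 1)) : ℕ) = min n c := by
  induction n with
  | zero => simp
  | succ n ih => rw [Function.iterate_succ_apply', Fin.val_orderSucc, ih]; omega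

section Frobenius

variable {p q : ℕ}

theorem exists_eq_add_mul_add_mul_of_le (hpq : p.Coprime q) (hp : 1 < p) (hq : 1 < q) {n : ℕ}
    (hn : p * q - 1 ≤ n) :
    ∃ x y : ℕ, n = p + q - 2 + x * p + y * q := by
  have hmul : p + q ≤ p * q := Nat.add_le_mul hp hq
  have hmem : n - (p + q - 2) ∈ AddSubmonoid.closure {p, q} := by
    by_contra h
    have := (frobeniusNumber_pair hpq hp hq).2 h
    omega
  obtain ⟨x, y, hxy⟩ := (AddSubmonoid.mem_closure_pair _ _ _).mp hmem
  exact ⟨x, y, by simp only [smul_eq_mul] at hxy; omega⟩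

theorem not_exists_mul_sub_two_eq (hpq : p.Coprime q) (hp : 1 < p) (hq : 1 < q) :
    ¬∃ x y : ℕ, p * q - 2 = p + q - 2 + x * p + y * q := by
  have hmul : p + q ≤ p * q := Nat.add_le_mul hp hq
  rintro ⟨x, y, hxy⟩
  refine (frobeniusNumber_pair hpq hp hq).1 ((AddSubmonoid.mem_closure_pair _ _ _).mpr ⟨x, y, ?_⟩)
  simp only [smul_eq_mul]
  omega

theorem sc_countLang_frobenius {α : Type} [DecidableEq α] [Fintype α] (hpq : p.Coprime q)
    (hp : 1 < p) (hq : 1 < q) :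
    sc (countLang (fun n => ∃ x y : ℕ, n = p + q - 2 + x * p + y * q) : Language α) =
      (p * q) ^ Fintype.card α := by
  have hmul : p + q ≤ p * q := Nat.add_le_mul hp hq
  have hP (n : ℕ) : (∃ x y : ℕ, min n (p * q - 1) = p + q - 2 + x * p + y * q) ↔
      ∃ x y : ℕ, n = p + q - 2 + x * p + y * q := by
    rcases le_total n (p * q - 1) with h | h
    · rw [min_eq_left h]
    · rw [min_eq_right h]
      exact iff_of_true (exists_eq_add_mul_add_mul_of_le hpq hp hq le_rfl)
        (exists_eq_add_mul_add_mul_of_le hpq hp hq h)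
  refine sc_countLang ?_ (fun i _ => ⟨p * q, ?_⟩) (fun i j hij hj => ⟨p * q - 2 - i, ?_⟩)
  · have hrec := recognizedBy_countLang (α := α) (f := Order.succ)
      (s₀ := (0 : Fin (p * q - 1 + 1))) (A := {i | ∃ x y : ℕ, (i : ℕ) = p + q - 2 + x * p + y * q})
      fun n => by rw [Set.mem_ofPred_eq, Fin.val_orderSucc_iterate_zero, hP]
    rwa [Fintype.card_fin, Nat.sub_add_cancel (by omega)] at hrec
  · exact exists_eq_add_mul_add_mul_of_le hpq hp hq (by omega)
  · rw [show i + (p * q - 2 - i) = p * q - 2 by omega]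
    exact fun h => not_exists_mul_sub_two_eq hpq hp hq
      (h.mpr (exists_eq_add_mul_add_mul_of_le hpq hp hq (by omega)))

end Frobenius

theorem sc_shuffle_group_sharp_general {α : Type} [Fintype α] [DecidableEq α] (k p q : ℕ)
    (hk : Fintype.card α = k)
    (hp : p.Prime) (hq : q.Prime) (hpq : p ≠ q)
    (U V : Language α)
    (hU : U = {w : List α | ∀ a : α, w.count a % p = p - 1})
    (hV : V = {w : List α | ∀ a : α, w.count a % q = q - 1}) :
    IsCommutativeLang U ∧ IsGroupLang U ∧
    IsCommutativeLang V ∧ IsGroupLang V ∧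
    sc U = p ^ k ∧ sc V = q ^ k ∧
    Shuffle U V =
      {w : List α | ∀ a : α, ∃ x y : ℕ, w.count a = p + q - 2 + x * p + y * q} ∧
    sc (Shuffle U V) = (p * q) ^ k := by
  subst hk
  obtain rfl : U = countLang (· % p = p - 1) := hU
  obtain rfl : V = countLang (· % q = q - 1) := hV
  have hshuffle := shuffle_countLang_mod (α := α) hp.pos hq.pos
  refine ⟨isCommutativeLang_countLang _, isGroupLang_countLang_mod hp.pos,
    isCommutativeLang_countLang _, isGroupLang_countLang_mod hq.pos,
    sc_countLang_mod hp.pos, sc_countLang_mod hq.pos, hshuffle, ?_⟩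
  rw [hshuffle]
  exact sc_countLang_frobenius ((Nat.coprime_primes hp hq).mpr hpq) hp.one_lt hq.one_lt

/-- for distinct primes `p ≠ q` and an alphabet of size `k ≥ 1`,
the languages `U = {w | ∀ a, |w|_a ≡ p - 1 (mod p)}` and
`V = {w | ∀ a, |w|_a ≡ q - 1 (mod q)}` are commutative group languages with
`sc U = p ^ k`, `sc V = q ^ k`, the shuffle is
`{w | ∀ a, |w|_a ∈ {p + q - 2 + x p + y q}}` and `sc (U ⧢ V) = (p q) ^ k`. -/
theorem sc_shuffle_group_sharp {α : Type} [Fintype α] [DecidableEq α] (k p q : ℕ)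
    (hk : Fintype.card α = k) (hk1 : 1 ≤ k)
    (hp : p.Prime) (hq : q.Prime) (hpq : p ≠ q)
    (U V : Language α)
    (hU : U = {w : List α | ∀ a : α, w.count a % p = p - 1})
    (hV : V = {w : List α | ∀ a : α, w.count a % q = q - 1}) :
    IsCommutativeLang U ∧ IsGroupLang U ∧
    IsCommutativeLang V ∧ IsGroupLang V ∧
    sc U = p ^ k ∧ sc V = q ^ k ∧
    Shuffle U V =
      {w : List α | ∀ a : α, ∃ x y : ℕ, w.count a = p + q - 2 + x * p + y * q} ∧
    sc (Shuffle U V) = (p * q) ^ k :=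
  sc_shuffle_group_sharp_general k p q hk hp hq hpq U V hU hV
end

section
/- Let Σ be a finite alphabet, a ∈ Σ, and n > 0. Define L = {w | |w|_a ≡ n − 1 (mod n)}. Then L is a commutative group language with sc(L) = n, its upward closure equals ↑L = {w | |w|_a ≥ n − 1}, and sc(↑L) = n. -/
open List

/-!
The state reached after reading `w` in the natural automaton for either language depends only
on `|w|_a`: for `L` it is `|w|_a mod n`, for `↑L` it is `min (|w|_a) (n - 1)`; both automata have
`n` states. Conversely the words `a^0, …, a^(n-1)` are pairwise separated by a suffix of the form
`a^t`, so any automaton for either language needs `n` states. The upward closure is computed from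
`u ≼ v → |u|_a ≤ |v|_a` and the witness `a^(n-1) ∈ L`.
-/

namespace Language

variable {α : Type}

theorem nerode_symm {L : Language α} {u v : List α} (h : Nerode L u v) : Nerode L v u :=
  fun x => (h x).symm

theorem card_le_of_recognizedBy {L : Language α} {ι : Type} [Fintype ι] (f : ι → List α)
    (hf : Pairwise fun i j => ¬Nerode L (f i) (f j)) {k : ℕ} (hk : RecognizedBy L k) :
    Fintype.card ι ≤ k := by
  obtain ⟨σ, _, M, rfl, rfl⟩ := hk
  refine Fintype.card_le_of_injective (fun i => M.eval (f i)) fun i j hij => ?_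
  by_contra hne
  refine hf hne fun x => ?_
  simp only [DFA.mem_accepts, DFA.eval, DFA.evalFrom_of_append]
  rw [show M.evalFrom M.start (f i) = M.evalFrom M.start (f j) from hij]

theorem sc_eq_of_recognizedBy {L : Language α} {n : ℕ} (hL : RecognizedBy L n)
    (f : Fin n → List α) (hf : Pairwise fun i j => ¬Nerode L (f i) (f j)) : sc L = n :=
  le_antisymm (Nat.sInf_le hL) <|
    le_csInf ⟨n, hL⟩ fun _ hk => by simpa using card_le_of_recognizedBy f hf hk

variable [DecidableEq α]

def ofCount (a : α) (P : ℕ → Prop) : Language α :=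
  {w | P (w.count a)}

@[simp]
theorem mem_ofCount {a : α} {P : ℕ → Prop} {w : List α} :
    w ∈ ofCount a P ↔ P (w.count a) :=
  Iff.rfl

theorem isCommutativeLang_ofCount (a : α) (P : ℕ → Prop) : IsCommutativeLang (ofCount a P) :=
  fun u v huv => by simp only [mem_ofCount, huv.count_eq a]

theorem not_nerode_replicate (a : α) {P : ℕ → Prop} {i j : ℕ} (t : ℕ)
    (ht : ¬(P (i + t) ↔ P (j + t))) :
    ¬Nerode (ofCount a P) (replicate i a) (replicate j a) :=
  fun h => ht <| by simpa using h (replicate t a)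

theorem pairwise_not_nerode_replicate (a : α) {P : ℕ → Prop} {n : ℕ}
    (hP : ∀ i j, i < j → j < n → ∃ t, ¬(P (i + t) ↔ P (j + t))) :
    Pairwise fun i j : Fin n =>
      ¬Nerode (ofCount a P) (replicate i a) (replicate j a) := by
  intro i j hij
  rcases lt_or_gt_of_ne (Fin.val_ne_of_ne hij) with hlt | hlt
  · obtain ⟨t, ht⟩ := hP i j hlt j.isLt
    exact not_nerode_replicate a t ht
  · obtain ⟨t, ht⟩ := hP j i hlt i.isLt
    exact fun h => not_nerode_replicate a t ht (nerode_symm h)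

theorem upClosure_ofCount_mod (a : α) {n r : ℕ} (hr : r < n) :
    UpClosure (ofCount a (· % n = r)) = ofCount a (r ≤ ·) := by
  ext w
  constructor
  · rintro ⟨u, hu, hsub⟩
    exact (hu ▸ Nat.mod_le _ _).trans (hsub.count_le a)
  · intro hw
    refine ⟨replicate r a, ?_, replicate_sublist_iff.mpr hw⟩
    simp [count_replicate_self, Nat.mod_eq_of_lt hr]

theorem pairwise_not_nerode_ofCount_mod (a : α) {n : ℕ} (hn : 0 < n) :
    Pairwise fun i j : Fin n =>
      ¬Nerode (ofCount a (· % n = n - 1)) (replicate i a) (replicate j a) := by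
  -- `a^(n-1-i)` completes `a^i` to `a^(n-1)` but `a^j` to `a^(n-1+(j-i))`.
  refine pairwise_not_nerode_replicate a fun i j hij hjn => ⟨n - 1 - i, fun h => ?_⟩
  have hi : (i + (n - 1 - i)) % n = n - 1 := by
    rw [show i + (n - 1 - i) = n - 1 by omega, Nat.mod_eq_of_lt (by omega)]
  have hj : (j + (n - 1 - i)) % n = j - i - 1 := by
    rw [show j + (n - 1 - i) = j - i - 1 + n by omega, Nat.add_mod_right,
      Nat.mod_eq_of_lt (by omega)]
  have := h.mp hi
  omega

theorem pairwise_not_nerode_ofCount_le (a : α) (n : ℕ) :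
    Pairwise fun i j : Fin n =>
      ¬Nerode (ofCount a (n - 1 ≤ ·)) (replicate i a) (replicate j a) :=
  pairwise_not_nerode_replicate a fun i j hij hjn => ⟨n - 1 - j, by omega⟩

def countModDFA (a : α) (n r : ℕ) : DFA α (ZMod n) where
  step q c := if c = a then q + 1 else q
  start := 0
  accept := {q | q.val = r}

theorem countModDFA_evalFrom (a : α) (n r : ℕ) (q : ZMod n) (w : List α) :
    (countModDFA a n r).evalFrom q w = q + w.count a := by
  induction w generalizing q with
  | nil => simp
  | cons c w ih =>
    rw [DFA.evalFrom_cons, ih]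
    by_cases hc : c = a
    · subst hc
      simp only [countModDFA, ↓reduceIte, count_cons_self]
      push_cast
      ring
    · simp [countModDFA, hc, count_cons_of_ne hc]

theorem countModDFA_accepts (a : α) (n r : ℕ) :
    (countModDFA a n r).accepts = ofCount a (· % n = r) := by
  ext w
  rw [DFA.mem_accepts, DFA.eval, countModDFA_evalFrom, mem_ofCount]
  change ((0 : ZMod n) + (w.count a : ZMod n)).val = r ↔ _
  rw [zero_add, ZMod.val_natCast]

theorem isPermDFA_countModDFA (a : α) (n r : ℕ) : IsPermDFA (countModDFA a n r) := by
  intro c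
  by_cases hc : c = a
  · simp only [countModDFA, if_pos hc]
    exact (Equiv.addRight 1).bijective
  · simp only [countModDFA, if_neg hc]
    exact Function.bijective_id

def thresholdDFA (a : α) (k : ℕ) : DFA α (Fin (k + 1)) where
  step q c := if c = a then ⟨min (q + 1) k, by omega⟩ else q
  start := 0
  accept := {Fin.last k}

theorem thresholdDFA_evalFrom (a : α) (k : ℕ) (q : Fin (k + 1)) (w : List α) :
    (thresholdDFA a k).evalFrom q w = ⟨min (q + w.count a) k, by omega⟩ := by
  induction w generalizing q with
  | nil => ext; simp only [DFA.evalFrom_nil, count_nil, add_zero]; omega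
  | cons c w ih =>
    rw [DFA.evalFrom_cons, ih]
    by_cases hc : c = a
    · subst hc
      ext
      simp only [thresholdDFA, ↓reduceIte, count_cons_self]
      omega
    · simp [thresholdDFA, hc, count_cons_of_ne hc]

theorem thresholdDFA_accepts (a : α) (k : ℕ) :
    (thresholdDFA a k).accepts = ofCount a (k ≤ ·) := by
  ext w
  simp only [DFA.mem_accepts, DFA.eval, thresholdDFA_evalFrom, mem_ofCount]
  simp [thresholdDFA, Fin.ext_iff]

end Language

open Language in
theorem upClosure_group_lower_bound_general {α : Type} [DecidableEq α]
    (a : α) (n : ℕ) (hn : 0 < n) (L : Language α)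
    (hL : L = {w : List α | w.count a % n = n - 1}) :
    IsCommutativeLang L ∧ IsGroupLang L ∧ sc L = n ∧
    UpClosure L = {w : List α | n - 1 ≤ w.count a} ∧
    sc (UpClosure L) = n := by
  have : NeZero n := NeZero.of_pos hn
  replace hL : L = ofCount a (· % n = n - 1) := hL
  have hup : UpClosure L = ofCount a (n - 1 ≤ ·) :=
    hL ▸ upClosure_ofCount_mod a (Nat.sub_one_lt_of_lt hn)
  have hL_accepts : (countModDFA a n (n - 1)).accepts = L := hL ▸ countModDFA_accepts ..
  have hup_accepts : (thresholdDFA a (n - 1)).accepts = UpClosure L :=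
    hup ▸ thresholdDFA_accepts ..
  refine ⟨hL ▸ isCommutativeLang_ofCount a _,
    ⟨ZMod n, inferInstance, _, isPermDFA_countModDFA a n _, hL_accepts⟩, ?_, hup, ?_⟩
  · refine sc_eq_of_recognizedBy ⟨ZMod n, inferInstance, _, ZMod.card n, hL_accepts⟩
      (fun i => replicate i a) ?_
    exact hL ▸ pairwise_not_nerode_ofCount_mod a hn
  · refine sc_eq_of_recognizedBy
      ⟨Fin (n - 1 + 1), inferInstance, _, by rw [Fintype.card_fin]; omega, hup_accepts⟩
      (fun i => replicate i a) ?_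
    exact hup ▸ pairwise_not_nerode_ofCount_le a n

/-- for `n > 0`, the language `L = {w | |w|_a ≡ n - 1 (mod n)}` is a
commutative group language with `sc L = n`, its upward closure is
`{w | |w|_a ≥ n - 1}`, of state complexity `n`. -/
theorem upClosure_group_lower_bound {α : Type} [Fintype α] [DecidableEq α]
    (a : α) (n : ℕ) (hn : 0 < n) (L : Language α)
    (hL : L = {w : List α | w.count a % n = n - 1}) :
    IsCommutativeLang L ∧ IsGroupLang L ∧ sc L = n ∧
    UpClosure L = {w : List α | n - 1 ≤ w.count a} ∧
    sc (UpClosure L) = n :=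
  upClosure_group_lower_bound_general a n hn L hL
end
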